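/- arXiv:2404.05672 — 4 statements merged into one kernel-verified Lean document; each statement's English description precedes it below -/
import Mathlib

section
/- For all integers n ≥ 1, the total number of valleys over all Catalan words of length n equals Σ_{ℓ=1}^{n-1} C(2(n-ℓ)-1, n-ℓ-3), where a summand is taken to be 0 whenever n - ℓ - 3 < 0. -/
/-- The set of Catalan words of length `n`: words `w` over ℕ with `w 1 = 0` and
`w (i+1) ≤ w i + 1` for all `i`. -/
def CatalanWord (n : ℕ) : Set (List ℕ) :=
  {w | w.length = n ∧ w.getD 0 0 = 0 ∧
    ∀ i, i + 1 < n → w.getD (i + 1) 0 ≤ w.getD i 0 + 1}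

/-- Number of `l`-valleys of `w`: occurrences of a factor `a b^l (b+1)` with `a > b`. -/
def lValleys (l : ℕ) (w : List ℕ) : ℕ :=
  ((Finset.range w.length).filter (fun i =>
    i + l + 1 < w.length ∧
    w.getD (i + 1) 0 < w.getD i 0 ∧
    (∀ j, j < l → w.getD (i + 1 + j) 0 = w.getD (i + 1) 0) ∧
    w.getD (i + l + 1) 0 = w.getD (i + 1) 0 + 1)).card

/-- Total number of valleys of `w` (that is, `l`-valleys for all `l ≥ 1`). -/
def valleys (w : List ℕ) : ℕ :=
  ∑ l ∈ Finset.Icc 1 w.length, lValleys l w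

/-!
An `l`-valley at position `i` with bottom letter `b` cuts a Catalan word uniquely as
`p ++ replicate l b ++ (b + 1) :: v`, where `p` is a Catalan word of length `i + 1` whose last
letter exceeds `b` and `v` is an arbitrary tail after the letter `b + 1`; so the words with such
a valley are counted by a product of two factors.

Tails of length `k` after a letter `c` are counted by the ballot numbers
`numTails c k = C(2k+c+1, k) - C(2k+c+1, k+c+2)`, whose generating function is `C(x)^(c+2)` for
the Catalan series `C`; hence the convolution
`∑_{s+t=m} numTails c₁ s * numTails c₂ t = numTails (c₁+c₂+2) m`. Appending letters one at a
time shows that the Catalan words of length `j + 1` ending at a letter `≥ a` are counted by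
`numTails a (j - a)`. Summing over the position and the bottom letter, the `l`-valleys therefore
contribute `∑_{b ≤ M} numTails (2b+4) (M-b)` with `M = n - l - 3`, which telescopes to
`C(2M+5, M)`.
-/

open Finset

def IsCatalanStep (a b : ℕ) : Prop := b ≤ a + 1

def catalanTails : ℕ → ℕ → Finset (List ℕ)
  | _, 0 => {[]}
  | c, k + 1 => (range (c + 2)).biUnion fun x => (catalanTails x k).image (x :: ·)

theorem mem_catalanTails {c k : ℕ} {t : List ℕ} :
    t ∈ catalanTails c k ↔ t.length = k ∧ (c :: t).IsChain IsCatalanStep := by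
  induction k generalizing c t with
  | zero => cases t <;> simp [catalanTails]
  | succ k ih =>
    cases t with
    | nil => simp [catalanTails]
    | cons x t =>
      simp [catalanTails, ih, List.isChain_cons_cons, IsCatalanStep, Nat.lt_succ_iff]
      tauto

def numTails (c k : ℕ) : ℕ := #(catalanTails c k)

@[simp]
theorem numTails_zero (c : ℕ) : numTails c 0 = 1 := rfl

theorem numTails_succ (c k : ℕ) : numTails c (k + 1) = ∑ x ∈ range (c + 2), numTails x k := by
  rw [numTails, catalanTails, card_biUnion]
  · exact sum_congr rfl fun x _ => card_image_of_injective _ List.cons_injective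
  · intro x _ y _ hxy
    simp only [Function.onFun, disjoint_left, mem_image]
    rintro _ ⟨t, _, rfl⟩ ⟨t', _, h⟩
    exact hxy (List.cons_eq_cons.1 h).1.symm

theorem numTails_zero_succ (k : ℕ) : numTails 0 (k + 1) = numTails 0 k + numTails 1 k := by
  simp [numTails_succ, sum_range_succ]

theorem numTails_succ_succ (c k : ℕ) :
    numTails (c + 1) (k + 1) = numTails c (k + 1) + numTails (c + 2) k := by
  rw [numTails_succ, numTails_succ, sum_range_succ]

theorem numTails_eq_choose_sub_choose (c k : ℕ) :
    (numTails c k : ℤ) = (2 * k + c + 1).choose k - (2 * k + c + 1).choose (k + c + 2) := by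
  induction k generalizing c with
  | zero => simp
  | succ k ih =>
    induction c with
    | zero =>
      rw [numTails_zero_succ]
      have h1 := Nat.choose_succ_succ' (2 * k + 2) k
      have h2 := Nat.choose_succ_succ' (2 * k + 1) k
      have h3 := Nat.choose_succ_succ' (2 * k + 2) (k + 2)
      have h4 := Nat.choose_succ_succ' (2 * k + 1) (k + 1)
      push_cast [ih]
      ring_nf at *
      linarith
    | succ c ihc =>
      rw [numTails_succ_succ]
      have h1 := Nat.choose_succ_succ' (2 * k + c + 3) k
      have h2 := Nat.choose_succ_succ' (2 * k + c + 3) (k + c + 3)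
      push_cast [ihc, ih]
      ring_nf at *
      linarith

theorem sum_antidiagonal_numTails_mul (c₁ c₂ s : ℕ) :
    ∑ p ∈ antidiagonal s, numTails c₁ p.1 * numTails c₂ p.2 = numTails (c₁ + c₂ + 2) s := by
  induction s generalizing c₁ with
  | zero => simp
  | succ s ih =>
    induction c₁ with
    | zero =>
      rw [Nat.sum_antidiagonal_succ]
      simp only [numTails_zero_succ, add_mul, sum_add_distrib, ih, numTails_zero, one_mul]
      rw [show 0 + c₂ + 2 = c₂ + 1 + 1 by ring, numTails_succ_succ, numTails_succ_succ]
      ring_nf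
    | succ c ihc =>
      rw [Nat.sum_antidiagonal_succ] at ihc ⊢
      simp only [numTails_succ_succ c, add_mul, sum_add_distrib, ih, numTails_zero,
        one_mul] at ihc ⊢
      rw [← add_assoc, ihc, show c + 1 + c₂ + 2 = c + c₂ + 2 + 1 by ring,
        numTails_succ_succ (c + c₂ + 2) s]
      ring_nf

theorem sum_range_numTails_two_mul_add_four (M : ℕ) :
    ∑ b ∈ range (M + 1), numTails (2 * b + 4) (M - b) = (2 * M + 5).choose M := by
  have hterm : ∀ b ∈ range (M + 1), (numTails (2 * b + 4) (M - b) : ℤ) =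
      (2 * M + 5).choose (M + 5 + b) - (2 * M + 5).choose (M + 5 + (b + 1)) := by
    intro b hb
    have hb : b ≤ M := Nat.lt_succ_iff.1 (mem_range.1 hb)
    rw [numTails_eq_choose_sub_choose, ← Nat.choose_symm (show M + 5 + b ≤ 2 * M + 5 by omega),
      show 2 * (M - b) + (2 * b + 4) + 1 = 2 * M + 5 by omega,
      show M - b + (2 * b + 4) + 2 = M + 5 + (b + 1) by omega,
      show 2 * M + 5 - (M + 5 + b) = M - b by omega]
  zify
  rw [sum_congr rfl hterm, sum_range_sub', add_zero,
    Nat.choose_eq_zero_of_lt (by omega : 2 * M + 5 < M + 5 + (M + 1)), Nat.cast_zero, sub_zero,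
    Nat.choose_symm_of_eq_add (show 2 * M + 5 = M + 5 + M by omega)]

def catalanWords : ℕ → Finset (List ℕ)
  | 0 => {[]}
  | n + 1 => (catalanTails 0 n).image (0 :: ·)

theorem mem_catalanWords {n : ℕ} {w : List ℕ} :
    w ∈ catalanWords n ↔ w.length = n ∧ w.getD 0 0 = 0 ∧ w.IsChain IsCatalanStep := by
  cases n with
  | zero => cases w <;> simp [catalanWords]
  | succ n =>
    cases w with
    | nil => simp [catalanWords]
    | cons x t =>
      simp only [catalanWords, mem_image, mem_catalanTails, List.cons_eq_cons, List.length_cons,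
        List.getD_cons_zero]
      constructor
      · rintro ⟨t, ⟨rfl, hc⟩, rfl, rfl⟩
        exact ⟨rfl, rfl, hc⟩
      · rintro ⟨hl, rfl, hc⟩
        exact ⟨t, ⟨by omega, hc⟩, rfl, rfl⟩

theorem isChain_isCatalanStep_iff_getD {w : List ℕ} :
    w.IsChain IsCatalanStep ↔ ∀ i, i + 1 < w.length → w.getD (i + 1) 0 ≤ w.getD i 0 + 1 := by
  rw [List.isChain_iff_getElem]
  refine forall_congr' fun i => forall_congr' fun hi => ?_
  rw [List.getD_eq_getElem _ _ hi, List.getD_eq_getElem _ _ (by omega), IsCatalanStep]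

theorem coe_catalanWords (n : ℕ) : (catalanWords n : Set (List ℕ)) = CatalanWord n := by
  ext w
  simp only [mem_coe, mem_catalanWords, isChain_isCatalanStep_iff_getD, CatalanWord,
    Set.mem_ofPred_eq]
  constructor <;> rintro ⟨rfl, h⟩ <;> exact ⟨rfl, h⟩

theorem getD_le_of_mem_catalanWords {n : ℕ} {w : List ℕ} (hw : w ∈ catalanWords n) (i : ℕ) :
    w.getD i 0 ≤ i := by
  obtain ⟨-, hhead, hchain⟩ := mem_catalanWords.1 hw
  induction i with
  | zero => exact hhead.le
  | succ i ih =>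
    by_cases hi : i + 1 < w.length
    · exact (isChain_isCatalanStep_iff_getD.1 hchain i hi).trans (by omega)
    · rw [List.getD_eq_default _ _ (by omega)]
      exact Nat.zero_le _

theorem append_cons_mem_catalanWords_iff {p q : List ℕ} {i x n : ℕ} (hp : p.length = i + 1) :
    p ++ x :: q ∈ catalanWords n ↔ p ∈ catalanWords (i + 1) ∧ x ≤ p.getD i 0 + 1 ∧
      q ∈ catalanTails x (n - (i + 2)) ∧ i + 2 ≤ n := by
  have hlast : p.getLast? = some (p.getD i 0) := by
    simp [List.getLast?_eq_getElem?, hp, List.getD_eq_getElem?_getD]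
  simp only [mem_catalanWords, mem_catalanTails, List.isChain_append, hlast, List.head?_cons,
    Option.mem_def, Option.some.injEq, forall_eq', IsCatalanStep, List.length_append,
    List.length_cons, List.getD_append _ _ _ 0 (show 0 < p.length by omega), hp]
  constructor
  · rintro ⟨hn, h0, hcp, hcq, hx⟩
    exact ⟨⟨trivial, h0, hcp⟩, hx, ⟨by omega, hcq⟩, by omega⟩
  · rintro ⟨⟨-, h0, hcp⟩, hx, ⟨hq, hcq⟩, hn⟩
    exact ⟨by omega, h0, hcp, hcq, hx⟩

def numLastGe (j a : ℕ) : ℕ := #{w ∈ catalanWords (j + 1) | a ≤ w.getD j 0}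

theorem numLastGe_eq_zero {j a : ℕ} (h : j < a) : numLastGe j a = 0 :=
  card_eq_zero.2 <| filter_eq_empty_iff.2 fun _ hw =>
    (getD_le_of_mem_catalanWords hw j).trans_lt h |>.not_ge

theorem numLastGe_zero_right (j : ℕ) : numLastGe j 0 = numTails 0 j := by
  rw [numLastGe, filter_true_of_mem fun _ _ => Nat.zero_le _, catalanWords, numTails,
    card_image_of_injective _ List.cons_injective]

theorem card_filter_catalanWords_getD_eq (j a : ℕ) :
    #{w ∈ catalanWords (j + 2) | w.getD (j + 1) 0 = a} = numLastGe j (a - 1) := by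
  rw [numLastGe, ← card_image_of_injective {p ∈ catalanWords (j + 1) | a - 1 ≤ p.getD j 0}
    (List.append_left_injective [a])]
  congr 1
  ext w
  simp only [mem_filter, mem_image]
  constructor
  · rintro ⟨hw, rfl⟩
    have hlen := (mem_catalanWords.1 hw).1
    obtain ⟨p, x, rfl⟩ := (List.eq_nil_or_concat' w).resolve_left (by rintro rfl; simp at hlen)
    have hp : p.length = j + 1 := by simpa using hlen
    obtain ⟨hp', hx, -⟩ := (append_cons_mem_catalanWords_iff hp).1 hw
    have hx' : (p ++ [x]).getD (j + 1) 0 = x := by simp [hp]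
    exact ⟨p, ⟨hp', by rw [hx']; omega⟩, by rw [hx']⟩
  · rintro ⟨p, ⟨hp, ha⟩, rfl⟩
    have hlen := (mem_catalanWords.1 hp).1
    rw [append_cons_mem_catalanWords_iff hlen]
    exact ⟨⟨hp, by omega, by simp [catalanTails], by omega⟩, by simp [hlen]⟩

theorem numLastGe_succ (j a : ℕ) :
    numLastGe (j + 1) a = numLastGe (j + 1) (a + 1) + numLastGe j (a - 1) := by
  rw [← card_filter_catalanWords_getD_eq, numLastGe, numLastGe, ← card_union_of_disjoint,
    ← filter_or]
  · exact congrArg card (filter_congr fun w _ => by omega)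
  · exact disjoint_filter.2 fun w _ h => by omega

theorem numLastGe_eq {j a : ℕ} (h : a ≤ j) : numLastGe j a = numTails a (j - a) := by
  induction j generalizing a with
  | zero => rw [Nat.le_zero.1 h, numLastGe_zero_right]
  | succ j ih =>
    suffices key : ∀ d a, a + d = j + 1 → numLastGe (j + 1) a = numTails a d from
      key _ a (by omega)
    intro d
    induction d with
    | zero =>
      intro a ha
      rw [numLastGe_succ, numLastGe_eq_zero (by omega), ih (by omega),
        show j - (a - 1) = 0 by omega, numTails_zero, numTails_zero]
    | succ d ihd =>
      intro a ha
      rw [numLastGe_succ, ihd (a + 1) (by omega), ih (by omega)]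
      cases a with
      | zero => rw [numTails_zero_succ, Nat.zero_sub, Nat.sub_zero, show j = d by omega, add_comm]
      | succ c =>
        rw [numTails_succ_succ, Nat.add_sub_cancel, show j - c = d + 1 by omega, add_comm]

theorem sum_antidiagonal_numLastGe_mul_numTails {a m : ℕ} (h : a ≤ m) :
    ∑ p ∈ antidiagonal m, numLastGe p.1 a * numTails a p.2 = numTails (2 * a + 2) (m - a) := by
  rw [Nat.sum_antidiagonal_eq_sum_range_succ_mk, show m.succ = a + (m - a + 1) by omega,
    sum_range_add, sum_eq_zero fun k hk => by rw [numLastGe_eq_zero (mem_range.1 hk), zero_mul],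
    zero_add, show 2 * a + 2 = a + a + 2 by ring, ← sum_antidiagonal_numTails_mul,
    Nat.sum_antidiagonal_eq_sum_range_succ_mk]
  refine sum_congr rfl fun k hk => ?_
  rw [numLastGe_eq (by omega), Nat.add_sub_cancel_left, show m - (a + k) = m - a - k by omega]

def IsLValleyAt (l : ℕ) (w : List ℕ) (i : ℕ) : Prop :=
  i + l + 1 < w.length ∧ w.getD (i + 1) 0 < w.getD i 0 ∧
    (∀ j, j < l → w.getD (i + 1 + j) 0 = w.getD (i + 1) 0) ∧
    w.getD (i + l + 1) 0 = w.getD (i + 1) 0 + 1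

instance (l : ℕ) (w : List ℕ) : DecidablePred (IsLValleyAt l w) :=
  fun _ => inferInstanceAs (Decidable (_ ∧ _))

theorem lValleys_eq_card (l : ℕ) (w : List ℕ) :
    lValleys l w = #{i ∈ range w.length | IsLValleyAt l w i} := rfl

theorem isLValleyAt_and_getD_eq_iff {l i b : ℕ} {w : List ℕ} (hl : l ≠ 0) :
    IsLValleyAt l w i ∧ w.getD (i + 1) 0 = b ↔
      ∃ p v, p.length = i + 1 ∧ b < p.getD i 0 ∧ w = p ++ List.replicate l b ++ (b + 1) :: v := by
  constructor
  · rintro ⟨⟨hlen, hdesc, hrun, hup⟩, rfl⟩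
    refine ⟨w.take (i + 1), w.drop (i + l + 2), List.length_take_of_le (by omega), ?_, ?_⟩
    · rwa [List.getD_eq_getElem _ _ (show i < (w.take (i + 1)).length by simp; omega),
        List.getElem_take, ← List.getD_eq_getElem _ _ (by omega)]
    · have hrep : (w.drop (i + 1)).take l = List.replicate l (w.getD (i + 1) 0) := by
        refine List.ext_getElem (by simp; omega) fun j h₁ _ => ?_
        simp only [List.length_take, List.length_drop] at h₁
        rw [List.getElem_take, List.getElem_drop, List.getElem_replicate,
          ← List.getD_eq_getElem _ 0 (by omega), hrun j (by omega)]
      have hnext : w.drop (i + 1 + l) = (w.getD (i + 1) 0 + 1) :: w.drop (i + l + 2) := by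
        rw [List.drop_eq_getElem_cons (by omega), ← List.getD_eq_getElem _ 0 (by omega),
          show i + 1 + l = i + l + 1 by omega, hup]
      calc w = w.take (i + 1) ++ ((w.drop (i + 1)).take l ++ (w.drop (i + 1)).drop l) := by
            rw [List.take_append_drop, List.take_append_drop]
        _ = _ := by rw [hrep, List.drop_drop, hnext, List.append_assoc]
  · rintro ⟨p, v, hp, hb, rfl⟩
    have hshift : ∀ k, (p ++ List.replicate l b ++ (b + 1) :: v).getD (i + 1 + k) 0 =
        (List.replicate l b ++ (b + 1) :: v).getD k 0 := fun k => by
      rw [List.append_assoc, List.getD_append_right _ _ _ _ (by omega), hp,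
        Nat.add_sub_cancel_left]
    have hrun : ∀ k < l, (List.replicate l b ++ (b + 1) :: v).getD k 0 = b := fun k hk => by
      rw [List.getD_append _ _ _ _ (by simpa), List.getD_replicate _ hk]
    have hup : (List.replicate l b ++ (b + 1) :: v).getD l 0 = b + 1 := by
      rw [List.getD_append_right _ _ _ _ (by simp)]
      simp
    have hfirst : (p ++ List.replicate l b ++ (b + 1) :: v).getD (i + 1) 0 = b :=
      (hshift 0).trans (hrun 0 (Nat.pos_of_ne_zero hl))
    refine ⟨⟨by simp; omega, ?_, fun j hj => by rw [hshift, hrun j hj, hfirst], ?_⟩, hfirst⟩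
    · rwa [hfirst, List.append_assoc, List.getD_append _ _ _ i (by omega)]
    · rw [show i + l + 1 = i + 1 + l by omega, hshift, hup, hfirst]

theorem replicate_append_cons_mem_catalanTails_iff {b l m : ℕ} {v : List ℕ} :
    List.replicate l b ++ (b + 1) :: v ∈ catalanTails b m ↔
      v ∈ catalanTails (b + 1) (m - (l + 1)) ∧ l + 1 ≤ m := by
  have hrep : (b :: List.replicate l b).IsChain IsCatalanStep := by
    rw [← List.replicate_succ]
    exact List.isChain_replicate_of_rel _ (Nat.le_succ b)
  rw [mem_catalanTails, mem_catalanTails, ← List.cons_append, List.isChain_append]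
  rw [← List.replicate_succ] at hrep ⊢
  simp only [hrep, true_and, List.length_append, List.length_replicate, List.length_cons,
    List.getLast?_replicate, List.head?_cons, Option.mem_def, Nat.add_one_ne_zero, if_false,
    Option.some.injEq, forall_eq', IsCatalanStep, le_refl, and_true]
  have hlen : l + (v.length + 1) = m ↔ v.length = m - (l + 1) ∧ l + 1 ≤ m := by omega
  rw [hlen, and_right_comm]

theorem card_isLValleyAt_and_getD_eq {n l i : ℕ} (hl : l ≠ 0) (h : i + l + 1 < n) (b : ℕ) :
    #{w ∈ catalanWords n | IsLValleyAt l w i ∧ w.getD (i + 1) 0 = b} =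
      numLastGe i (b + 1) * numTails (b + 1) (n - (i + l + 2)) := by
  set glue : List ℕ × List ℕ → List ℕ := fun pv => pv.1 ++ List.replicate l b ++ (b + 1) :: pv.2
  have hmem {p v : List ℕ} (hp : p.length = i + 1) (hb : b < p.getD i 0) :
      glue (p, v) ∈ catalanWords n ↔
        p ∈ catalanWords (i + 1) ∧ v ∈ catalanTails (b + 1) (n - (i + l + 2)) := by
    obtain ⟨l, rfl⟩ := Nat.exists_eq_succ_of_ne_zero hl
    simp only [glue, List.replicate_succ, List.append_assoc, List.cons_append]
    rw [append_cons_mem_catalanWords_iff hp, replicate_append_cons_mem_catalanTails_iff,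
      show n - (i + 2) - (l + 1) = n - (i + (l + 1) + 2) by omega]
    constructor
    · rintro ⟨hp, -, ⟨hv, -⟩, -⟩
      exact ⟨hp, hv⟩
    · rintro ⟨hp, hv⟩
      exact ⟨hp, by omega, ⟨hv, by omega⟩, by omega⟩
  rw [numLastGe, numTails, ← card_product, ← card_image_of_injOn (f := glue)]
  · congr 1
    ext w
    simp only [mem_filter, mem_image, mem_product, Prod.exists]
    constructor
    · rintro ⟨hw, hv⟩
      obtain ⟨p, v, hp, hb, rfl⟩ := (isLValleyAt_and_getD_eq_iff hl).1 hv
      obtain ⟨hp', hv'⟩ := (hmem hp hb).1 hw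
      exact ⟨p, v, ⟨⟨hp', hb⟩, hv'⟩, rfl⟩
    · rintro ⟨p, v, ⟨⟨hp, hb⟩, hv⟩, rfl⟩
      have hlen := (mem_catalanWords.1 hp).1
      exact ⟨(hmem hlen hb).2 ⟨hp, hv⟩, (isLValleyAt_and_getD_eq_iff hl).2 ⟨p, v, hlen, hb, rfl⟩⟩
  · rintro ⟨p, v⟩ hpv ⟨p', v'⟩ hpv' heq
    simp only [coe_product, Set.mem_prod, mem_coe, mem_filter] at hpv hpv'
    have hlen : p.length = p'.length := by
      rw [(mem_catalanWords.1 hpv.1.1).1, (mem_catalanWords.1 hpv'.1.1).1]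
    simp only [glue, List.append_assoc] at heq
    obtain ⟨rfl, h2⟩ := List.append_inj heq hlen
    simpa using h2

theorem card_isLValleyAt {n l i : ℕ} (hl : l ≠ 0) :
    #{w ∈ catalanWords n | IsLValleyAt l w i} = if i + l + 1 < n then
      ∑ b ∈ range n, numLastGe i (b + 1) * numTails (b + 1) (n - (i + l + 2)) else 0 := by
  split_ifs with h
  · rw [card_eq_sum_card_fiberwise (f := fun w => w.getD (i + 1) 0) (t := range n)]
    · simp only [filter_filter, card_isLValleyAt_and_getD_eq hl h]
    · intro w hw
      have := getD_le_of_mem_catalanWords (mem_filter.1 hw).1 (i + 1)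
      simp only [coe_range, Set.mem_Iio]
      omega
  · exact card_eq_zero.2 <| filter_eq_empty_iff.2 fun w hw hv =>
      h ((mem_catalanWords.1 hw).1 ▸ hv.1)

theorem sum_card_isLValleyAt {n l : ℕ} (hl : l ≠ 0) :
    ∑ i ∈ range n, #{w ∈ catalanWords n | IsLValleyAt l w i} =
      if l + 3 ≤ n then (2 * (n - l) - 1).choose (n - l - 3) else 0 := by
  simp only [card_isLValleyAt hl]
  split_ifs with h
  · obtain ⟨M, rfl⟩ := Nat.exists_eq_add_of_le h
    rw [show 2 * (l + 3 + M - l) - 1 = 2 * M + 5 by omega, show l + 3 + M - l - 3 = M by omega,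
      ← sum_range_numTails_two_mul_add_four]
    calc _ = ∑ i ∈ range (M + 2), ∑ b ∈ range (l + 3 + M),
          numLastGe i (b + 1) * numTails (b + 1) (M + 1 - i) := by
          refine (sum_subset (range_subset_range.2 (by omega)) fun i _ hi => ?_).symm.trans
            (sum_congr rfl fun i hi => ?_)
          · rw [if_neg (by simp at hi; omega)]
          · rw [if_pos (by simp at hi; omega), show l + 3 + M - (i + l + 2) = M + 1 - i by omega]
      _ = ∑ b ∈ range (l + 3 + M), ∑ p ∈ antidiagonal (M + 1),
          numLastGe p.1 (b + 1) * numTails (b + 1) p.2 := by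
          simp only [Nat.sum_antidiagonal_eq_sum_range_succ_mk]
          exact sum_comm
      _ = ∑ b ∈ range (M + 1), ∑ p ∈ antidiagonal (M + 1),
          numLastGe p.1 (b + 1) * numTails (b + 1) p.2 := by
          refine (sum_subset (range_subset_range.2 (by omega)) fun b _ hb => ?_).symm
          refine sum_eq_zero fun p hp => ?_
          rw [numLastGe_eq_zero (by simp at hb hp; omega), zero_mul]
      _ = _ := sum_congr rfl fun b hb => by
          rw [sum_antidiagonal_numLastGe_mul_numTails (by simp at hb; omega),
            show 2 * (b + 1) + 2 = 2 * b + 4 by ring, show M + 1 - (b + 1) = M - b by omega]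
  · refine sum_eq_zero fun i _ => ?_
    split_ifs with hi
    · exact sum_eq_zero fun b _ => by rw [numLastGe_eq_zero (by omega), zero_mul]
    · rfl

theorem sum_valleys_catalanWords (n : ℕ) :
    ∑ w ∈ catalanWords n, valleys w =
      ∑ l ∈ Icc 1 n, ∑ i ∈ range n, #{w ∈ catalanWords n | IsLValleyAt l w i} := by
  calc ∑ w ∈ catalanWords n, valleys w
      = ∑ w ∈ catalanWords n, ∑ l ∈ Icc 1 n, ∑ i ∈ range n, if IsLValleyAt l w i then 1 else 0 :=
        sum_congr rfl fun w hw => by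
          simp only [valleys, lValleys_eq_card, (mem_catalanWords.1 hw).1, card_filter]
    _ = _ := by
      rw [sum_comm]
      refine sum_congr rfl fun l _ => ?_
      rw [sum_comm]
      simp only [card_filter]

theorem total_valleys_general (n : ℕ) :
    ∑ᶠ w ∈ CatalanWord n, valleys w =
      ∑ l ∈ Finset.Icc 1 (n - 1),
        if l + 3 ≤ n then Nat.choose (2 * (n - l) - 1) (n - l - 3) else 0 := by
  rw [← coe_catalanWords, finsum_mem_coe_finset, sum_valleys_catalanWords,
    sum_congr rfl fun l hl => sum_card_isLValleyAt (Nat.one_le_iff_ne_zero.1 (mem_Icc.1 hl).1)]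
  rcases n with _ | n
  · rfl
  · rw [Nat.add_sub_cancel, sum_Icc_succ_top (by omega), if_neg (by omega), add_zero]

/-- The total number of valleys over all Catalan words of length `n` equals
`Σ_{l=1}^{n-1} C(2(n-l)-1, n-l-3)`, a summand being `0` whenever `n-l-3 < 0`. -/
theorem total_valleys (n : ℕ) (hn : 1 ≤ n) :
    ∑ᶠ w ∈ CatalanWord n, valleys w =
      ∑ l ∈ Finset.Icc 1 (n - 1),
        if l + 3 ≤ n then Nat.choose (2 * (n - l) - 1) (n - l - 3) else 0 :=
  total_valleys_general n
end

section
/- For every integer n ≥ 1, the number of Catalan words of length n having no valleys equals the Fibonacci number F_{2n-1}, where F_1 = F_2 = 1. -/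
/-!
Let `S n` be the valleyless Catalan words of length `n` and `T n ⊆ S n` those beginning `0 1`.
A word of `S (n+1)` outside `T (n+1)` is `0 :: v` with `v ∈ S n`.
A word of `T (n+2)` either ends in `0`, and is then `v ++ [0]` with `v ∈ T (n+1)`, or never returns
to `0`, and is then `0 :: (v + 1)` with `v ∈ S (n+1)`: a return to `0` followed by a rise would be a
descent followed by an ascent, and a valley sits between any such pair. None of these operations
creates or destroys a valley, so `|S (n+1)| = |S n| + |T (n+1)|` and
`|T (n+2)| = |T (n+1)| + |S (n+1)|`, the Fibonacci recursion interleaved: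
`|S (n+1)| = F (2n+1)` and `|T (n+1)| = F (2n)`.
-/

open Finset

theorem exists_lt_succ_of_lt {α : Type*} [LinearOrder α] {f : ℕ → α} {a b : ℕ} (hab : a ≤ b)
    (h : f a < f b) : ∃ j, a ≤ j ∧ j < b ∧ f j < f (j + 1) := by
  induction b, hab using Nat.le_induction with
  | base => exact absurd h (lt_irrefl _)
  | succ b hab ih =>
    by_cases hb : f a < f b
    · obtain ⟨j, haj, hjb, hj⟩ := ih hb
      exact ⟨j, haj, by omega, hj⟩
    · exact ⟨b, hab, by omega, (not_lt.mp hb).trans_lt h⟩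

theorem mem_catalanWord_iff {n : ℕ} {w : List ℕ} :
    w ∈ CatalanWord n ↔ w.length = n ∧ w.getD 0 0 = 0 ∧ w.IsChain (fun a b => b ≤ a + 1) := by
  simp only [CatalanWord, Set.mem_ofPred_eq, List.isChain_iff_getElem]
  refine and_congr_right fun hlen => and_congr_right fun _ => ?_
  subst hlen
  refine forall₂_congr fun i hi => ?_
  rw [List.getD_eq_getElem _ _ hi, List.getD_eq_getElem _ _ (by omega)]

theorem zero_cons_mem_catalanWord_iff {n : ℕ} {w : List ℕ} (hw : w.getD 0 0 = 0) :
    0 :: w ∈ CatalanWord (n + 1) ↔ w ∈ CatalanWord n := by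
  cases w <;> simp_all [mem_catalanWord_iff, List.isChain_cons, eq_comm]

theorem zero_cons_map_add_one_mem_catalanWord_iff {n : ℕ} {w : List ℕ} :
    0 :: w.map (· + 1) ∈ CatalanWord (n + 1) ↔ w ∈ CatalanWord n := by
  rw [mem_catalanWord_iff, mem_catalanWord_iff, List.isChain_cons, List.isChain_map]
  cases w <;> simp [eq_comm]

theorem append_zero_mem_catalanWord_iff {n : ℕ} {w : List ℕ} :
    w ++ [0] ∈ CatalanWord (n + 1) ↔ w ∈ CatalanWord n := by
  rw [mem_catalanWord_iff, mem_catalanWord_iff, List.isChain_append]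
  cases w <;> simp [eq_comm]

theorem lValleys_eq_zero_of_length_le {l : ℕ} {w : List ℕ} (h : w.length ≤ l) :
    lValleys l w = 0 := by
  simp only [lValleys, card_eq_zero, filter_eq_empty_iff]
  omega

theorem valleys_eq_sum_Icc {w : List ℕ} {m : ℕ} (hm : w.length ≤ m) :
    valleys w = ∑ l ∈ Icc 1 m, lValleys l w :=
  sum_subset (Icc_subset_Icc_right hm) fun _ hl hl' =>
    lValleys_eq_zero_of_length_le (by simp only [mem_Icc] at hl hl'; omega)

theorem valleys_congr {v w : List ℕ} (h : ∀ l, lValleys l v = lValleys l w) :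
    valleys v = valleys w := by
  rw [valleys_eq_sum_Icc (le_max_left v.length w.length),
    valleys_eq_sum_Icc (le_max_right v.length w.length)]
  exact sum_congr rfl fun l _ => h l

theorem valleys_zero_cons (w : List ℕ) : valleys (0 :: w) = valleys w := by
  refine valleys_congr fun l => ?_
  simp only [lValleys, card_filter, List.length_cons, sum_range_succ', add_right_comm _ 1,
    List.getD_cons_succ, add_lt_add_iff_right, List.getD_cons_zero, Nat.not_lt_zero, false_and,
    and_false, if_false, add_zero]

theorem getD_map_add_one {w : List ℕ} {k : ℕ} (hk : k < w.length) :
    (w.map (· + 1)).getD k 0 = w.getD k 0 + 1 := by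
  simp [hk]

theorem valleys_map_add_one (w : List ℕ) : valleys (w.map (· + 1)) = valleys w := by
  refine valleys_congr fun l => ?_
  simp only [lValleys, List.length_map]
  refine congrArg card (filter_congr fun i _ => and_congr_right fun hi => ?_)
  simp +contextual (disch := omega) only [getD_map_add_one, add_lt_add_iff_right, add_left_inj]

theorem valleys_append_zero (w : List ℕ) : valleys (w ++ [0]) = valleys w := by
  refine valleys_congr fun l => ?_
  simp only [lValleys, card_filter, List.length_append, List.length_singleton, sum_range_succ]
  rw [if_neg (by omega), add_zero]
  refine sum_congr rfl fun i _ => if_congr ?_ rfl rfl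
  by_cases h : i + l + 1 < w.length
  · simp +contextual (disch := omega) only [List.getD_append, h, h.trans (Nat.lt_succ_self _),
      true_and]
  · refine iff_of_false ?_ fun h' => h h'.1
    rintro ⟨-, -, -, hup⟩
    rw [List.getD_append_right _ _ _ _ (by omega)] at hup
    simp at hup

theorem getD_succ_le_of_plateau {w : List ℕ}
    (hw : ∀ i, i + 1 < w.length → w.getD (i + 1) 0 ≤ w.getD i 0 + 1) (hv : valleys w = 0)
    {i p : ℕ} (hip : i < p) (hp : p + 1 < w.length) (hdesc : w.getD (i + 1) 0 < w.getD i 0)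
    (hflat : ∀ q, i < q → q ≤ p → w.getD q 0 = w.getD (i + 1) 0) :
    w.getD (p + 1) 0 ≤ w.getD p 0 := by
  by_contra! hup
  have hl0 : lValleys (p - i) w = 0 := sum_eq_zero_iff.mp hv _ (mem_Icc.mpr ⟨by omega, by omega⟩)
  rw [lValleys, card_eq_zero, filter_eq_empty_iff] at hl0
  refine hl0 (mem_range.mpr (by omega))
    ⟨by omega, hdesc, fun k _ => hflat _ (by omega) (by omega), ?_⟩
  rw [show i + (p - i) + 1 = p + 1 by omega, ← hflat p hip le_rfl]
  have := hw p hp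
  omega

theorem getD_succ_le_of_descent {w : List ℕ}
    (hw : ∀ i, i + 1 < w.length → w.getD (i + 1) 0 ≤ w.getD i 0 + 1) (hv : valleys w = 0)
    {i j : ℕ} (hij : i < j) (hj : j + 1 < w.length) (hdesc : w.getD (i + 1) 0 < w.getD i 0) :
    w.getD (j + 1) 0 ≤ w.getD j 0 := by
  -- Extend the plateau `w (i+1) = ⋯ = w p`: a rise would close a valley, a fall restarts it.
  suffices key : ∀ d i p, p + d = j → i < p → w.getD (i + 1) 0 < w.getD i 0 →
      (∀ q, i < q → q ≤ p → w.getD q 0 = w.getD (i + 1) 0) → w.getD (j + 1) 0 ≤ w.getD j 0 from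
    key (j - (i + 1)) i (i + 1) (by omega) (by omega) hdesc fun q _ _ => by
      rw [show q = i + 1 by omega]
  intro d
  induction d with
  | zero =>
    intro i p hp hip hd hflat
    obtain rfl : p = j := hp
    exact getD_succ_le_of_plateau hw hv hip hj hd hflat
  | succ d ih =>
    intro i p hp hip hd hflat
    rcases lt_trichotomy (w.getD (p + 1) 0) (w.getD p 0) with hlt | heq | hgt
    · exact ih p (p + 1) (by omega) (by omega) hlt fun q _ _ => by rw [show q = p + 1 by omega]
    · refine ih i (p + 1) (by omega) (by omega) hd fun q hiq hqp => ?_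
      rcases Nat.lt_or_ge q (p + 1) with hq | hq
      · exact hflat q hiq (by omega)
      · rw [show q = p + 1 by omega, heq, hflat p hip le_rfl]
    · exact absurd hgt (not_lt.mpr (getD_succ_le_of_plateau hw hv hip (by omega) hd hflat))

theorem getD_ne_zero_of_valleys_eq_zero {n : ℕ} {w : List ℕ} (hw : w ∈ CatalanWord n)
    (hv : valleys w = 0) (h1 : w.getD 1 0 = 1) (hlast : w.getD (n - 1) 0 ≠ 0) {k : ℕ}
    (hk : 1 ≤ k) (hkn : k < n) : w.getD k 0 ≠ 0 := by
  intro hk0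
  obtain ⟨i, hi, hik, hdesc⟩ := exists_lt_succ_of_lt (f := fun i => OrderDual.toDual (w.getD i 0))
    (a := 1) (b := k) hk (OrderDual.toDual_lt_toDual.mpr (by rw [hk0, h1]; exact one_pos))
  obtain ⟨j, hkj, hjn, hasc⟩ := exists_lt_succ_of_lt (f := fun i => w.getD i 0)
    (a := k) (b := n - 1) (by omega) (by simp only [hk0]; omega)
  have := getD_succ_le_of_descent (by rw [hw.1]; exact hw.2.2) hv (i := i) (j := j) (by omega)
    (by rw [hw.1]; omega) (OrderDual.toDual_lt_toDual.mp hdesc)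
  exact absurd hasc (not_lt.mpr this)

def valleyless (n : ℕ) : Set (List ℕ) := {w | w ∈ CatalanWord n ∧ valleys w = 0}

def valleylessZeroOne (n : ℕ) : Set (List ℕ) := {w | w ∈ valleyless n ∧ w.getD 1 0 = 1}

theorem valleyless_zero : valleyless 0 = {[]} := by
  ext w
  simp only [Set.mem_singleton_iff]
  constructor
  · rintro ⟨⟨hlen, -⟩, -⟩
    exact List.eq_nil_of_length_eq_zero hlen
  · rintro rfl
    exact ⟨⟨rfl, rfl, fun _ h => absurd h (Nat.not_lt_zero _)⟩, rfl⟩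

theorem valleylessZeroOne_one : valleylessZeroOne 1 = ∅ := by
  refine Set.eq_empty_iff_forall_notMem.mpr ?_
  rintro w ⟨⟨⟨hlen, -⟩, -⟩, h1⟩
  rw [List.getD_eq_default _ _ (by omega)] at h1
  exact zero_ne_one h1

theorem valleyless_succ (n : ℕ) :
    valleyless (n + 1) = (0 :: ·) '' valleyless n ∪ valleylessZeroOne (n + 1) := by
  ext w
  constructor
  · rintro ⟨hw, hv⟩
    obtain ⟨hlen, h0, hchain⟩ := mem_catalanWord_iff.mp hw
    obtain _ | ⟨a, v⟩ := w
    · simp at hlen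
    obtain rfl : a = 0 := h0
    by_cases h1 : v.getD 0 0 = 1
    · exact Or.inr ⟨⟨hw, hv⟩, h1⟩
    have hv0 : v.getD 0 0 = 0 := by
      obtain _ | ⟨b, v⟩ := v
      · rfl
      have := (List.isChain_cons_cons.mp hchain).1
      rw [List.getD_cons_zero] at h1 ⊢
      omega
    exact Or.inl ⟨v, ⟨(zero_cons_mem_catalanWord_iff hv0).mp hw, by rwa [valleys_zero_cons] at hv⟩,
      rfl⟩
  · rintro (⟨v, ⟨hw, hv⟩, rfl⟩ | ⟨hw, -⟩)
    · exact ⟨(zero_cons_mem_catalanWord_iff hw.2.1).mpr hw, by rwa [valleys_zero_cons]⟩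
    · exact hw

theorem disjoint_valleyless_valleylessZeroOne (n : ℕ) :
    Disjoint ((0 :: ·) '' valleyless n) (valleylessZeroOne (n + 1)) := by
  refine Set.disjoint_left.mpr ?_
  rintro _ ⟨v, ⟨hw, -⟩, rfl⟩ ⟨-, h1⟩
  rw [List.getD_cons_succ, hw.2.1] at h1
  exact zero_ne_one h1

theorem exists_append_zero_eq_of_getD_eq_zero {n : ℕ} {w : List ℕ}
    (hw : w ∈ valleylessZeroOne (n + 2)) (hlast : w.getD (n + 1) 0 = 0) :
    ∃ v ∈ valleylessZeroOne (n + 1), v ++ [0] = w := by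
  obtain ⟨⟨hw, hv⟩, h1⟩ := hw
  obtain rfl | ⟨v, x, rfl⟩ := w.eq_nil_or_concat
  · simp at h1
  rw [List.concat_eq_append] at hw hv h1 hlast ⊢
  have hvlen : v.length = n + 1 := by simpa using hw.1
  obtain rfl : x = 0 := by
    rwa [List.getD_append_right _ _ _ _ hvlen.le, hvlen, Nat.sub_self, List.getD_cons_zero]
      at hlast
  have hn : n ≠ 0 := by
    rintro rfl
    exact one_ne_zero (h1.symm.trans hlast)
  refine ⟨v, ⟨⟨append_zero_mem_catalanWord_iff.mp hw, by rwa [valleys_append_zero] at hv⟩, ?_⟩, rfl⟩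
  rwa [List.getD_append _ _ _ _ (by omega)] at h1

theorem exists_zero_cons_map_add_one_eq_of_getD_ne_zero {n : ℕ} {w : List ℕ}
    (hw : w ∈ valleylessZeroOne (n + 2)) (hlast : w.getD (n + 1) 0 ≠ 0) :
    ∃ v ∈ valleyless (n + 1), 0 :: v.map (· + 1) = w := by
  obtain ⟨⟨hw, hv⟩, h1⟩ := hw
  obtain _ | ⟨a, u⟩ := w
  · simp at h1
  obtain rfl : a = 0 := hw.2.1
  have hpos : ∀ y ∈ u, y ≠ 0 := by
    intro y hy
    obtain ⟨k, hk, rfl⟩ := List.getElem_of_mem hy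
    have hulen : u.length = n + 1 := by simpa using hw.1
    have := getD_ne_zero_of_valleys_eq_zero hw hv h1 hlast (k := k + 1) (by omega) (by omega)
    rwa [List.getD_cons_succ, List.getD_eq_getElem _ _ hk] at this
  have hu : (u.map (· - 1)).map (· + 1) = u := by
    rw [List.map_map]
    exact (List.map_congr_left fun y hy => Nat.sub_add_cancel (Nat.one_le_iff_ne_zero.mpr
      (hpos y hy))).trans (List.map_id' u)
  refine ⟨u.map (· - 1), ?_, congrArg (0 :: ·) hu⟩
  rw [← hu] at hw hv
  exact ⟨zero_cons_map_add_one_mem_catalanWord_iff.mp hw,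
    by rwa [valleys_zero_cons, valleys_map_add_one] at hv⟩

theorem valleylessZeroOne_succ_succ (n : ℕ) :
    valleylessZeroOne (n + 2) = (· ++ [0]) '' valleylessZeroOne (n + 1) ∪
      (fun w => 0 :: w.map (· + 1)) '' valleyless (n + 1) := by
  ext w
  constructor
  · intro hw
    by_cases hlast : w.getD (n + 1) 0 = 0
    · exact Or.inl (exists_append_zero_eq_of_getD_eq_zero hw hlast)
    · exact Or.inr (exists_zero_cons_map_add_one_eq_of_getD_ne_zero hw hlast)
  · rintro (⟨v, ⟨⟨hw, hv⟩, h1⟩, rfl⟩ | ⟨v, ⟨hw, hv⟩, rfl⟩)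
    · have h1v : 1 < v.length := by
        by_contra h
        rw [List.getD_eq_default _ _ (by omega)] at h1
        exact zero_ne_one h1
      exact ⟨⟨append_zero_mem_catalanWord_iff.mpr hw, by rwa [valleys_append_zero]⟩,
        by rwa [List.getD_append _ _ _ _ h1v]⟩
    · refine ⟨⟨zero_cons_map_add_one_mem_catalanWord_iff.mpr hw,
        by rwa [valleys_zero_cons, valleys_map_add_one]⟩, ?_⟩
      rw [List.getD_cons_succ, getD_map_add_one (by rw [hw.1]; omega), hw.2.1]

theorem disjoint_valleylessZeroOne_valleyless (n : ℕ) :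
    Disjoint ((· ++ [0]) '' valleylessZeroOne (n + 1))
      ((fun w => 0 :: w.map (· + 1)) '' valleyless (n + 1)) := by
  refine Set.disjoint_left.mpr ?_
  rintro _ ⟨v, ⟨⟨hv, -⟩, -⟩, rfl⟩ ⟨u, ⟨hu, -⟩, heq⟩
  have hlast := congrArg (List.getD · (n + 1) 0) heq
  simp only [List.getD_cons_succ] at hlast
  rw [getD_map_add_one (by rw [hu.1]; omega), List.getD_append_right _ _ _ _ hv.1.le, hv.1,
    Nat.sub_self, List.getD_cons_zero] at hlast
  exact Nat.succ_ne_zero _ hlast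

theorem encard_valleyless_succ (n : ℕ) :
    (valleyless (n + 1)).encard = Nat.fib (2 * n + 1) ∧
      (valleylessZeroOne (n + 1)).encard = Nat.fib (2 * n) := by
  have hcons : Function.Injective (0 :: · : List ℕ → List ℕ) := List.cons_injective
  have hshift : Function.Injective (fun w : List ℕ => 0 :: w.map (· + 1)) :=
    List.cons_injective.comp (List.map_injective_iff.mpr (add_left_injective 1))
  induction n with
  | zero =>
    rw [valleylessZeroOne_one, valleyless_succ, valleyless_zero, valleylessZeroOne_one,
      Set.union_empty, hcons.encard_image]
    simp
  | succ n ih =>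
    have hZO : (valleylessZeroOne (n + 2)).encard = Nat.fib (2 * n + 2) := by
      rw [valleylessZeroOne_succ_succ,
        Set.encard_union_eq (disjoint_valleylessZeroOne_valleyless n),
        (List.append_left_injective [0]).encard_image, hshift.encard_image, ih.1, ih.2,
        Nat.fib_add_two, Nat.cast_add]
    refine ⟨?_, hZO⟩
    rw [valleyless_succ, Set.encard_union_eq (disjoint_valleyless_valleylessZeroOne _),
      hcons.encard_image, ih.1, hZO, show 2 * (n + 1) + 1 = 2 * n + 1 + 2 by ring,
      Nat.fib_add_two (n := 2 * n + 1), Nat.cast_add]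

/-- The number of Catalan words of length `n` with no valleys is the Fibonacci number
`F_{2n-1}` (with `F_1 = F_2 = 1`). -/
theorem valleyless_count_eq_fib (n : ℕ) (hn : 1 ≤ n) :
    Nat.card {w : List ℕ | w ∈ CatalanWord n ∧ valleys w = 0} =
      Nat.fib (2 * n - 1) := by
  obtain ⟨m, rfl⟩ := Nat.exists_eq_add_of_le' hn
  rw [Nat.card_coe_set_eq, Set.ncard_def]
  change ENat.toNat (valleyless (m + 1)).encard = _
  rw [(encard_valleyless_succ m).1, show 2 * (m + 1) - 1 = 2 * m + 1 by omega, ENat.toNat_natCast]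
end

section
/- For all integers n ≥ 1, the total number of symmetric valleys over all Catalan words of length n, denoted s(n), satisfies 2·s(n) = 2·(3n-2)·c_{n-1} − Σ_{k=1}^{n} C(2k,k), where c_m = (1/(m+1))·C(2m,m) is the m-th Catalan number. -/
/-- Number of symmetric valleys of `w`: occurrences of a factor `a (a-1)^l a` with `l ≥ 1`. -/
def symValleys (w : List ℕ) : ℕ :=
  ∑ l ∈ Finset.Icc 1 w.length, ((Finset.range w.length).filter (fun i =>
    i + l + 1 < w.length ∧
    (∀ j, j < l → w.getD (i + 1 + j) 0 + 1 = w.getD i 0) ∧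
    w.getD (i + l + 1) 0 = w.getD i 0)).card

open Finset

namespace SymVal

/-- Words of length `n` that validly continue a Catalan word whose last letter is `a`. -/
def D : ℕ → ℕ → Finset (List ℕ)
  | _, 0 => {[]}
  | a, n+1 => (Finset.range (a+2)).biUnion fun b => (D b n).image (b :: ·)

lemma D_zero (a : ℕ) : D a 0 = {[]} := rfl

lemma D_succ (a n : ℕ) :
    D a (n+1) = (Finset.range (a+2)).biUnion fun b => (D b n).image (b :: ·) := rfl

lemma sum_D {M : Type*} [AddCommMonoid M] (a n : ℕ) (f : List ℕ → M) :
    ∑ w ∈ D a (n+1), f w = ∑ b ∈ Finset.range (a+2), ∑ w ∈ D b n, f (b :: w) := by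
  have hdisj : (↑(Finset.range (a+2)) : Set ℕ).PairwiseDisjoint
      (fun b => (D b n).image (b :: ·)) := by
    intro x _ y _ hxy
    refine Finset.disjoint_left.2 fun w hwx hwy => hxy ?_
    simp only [Finset.mem_image] at hwx hwy
    obtain ⟨t, _, rfl⟩ := hwx
    obtain ⟨s, _, h⟩ := hwy
    exact (List.cons_eq_cons.1 h.symm).1
  rw [D_succ, Finset.sum_biUnion hdisj]
  refine Finset.sum_congr rfl fun b _ => ?_
  exact Finset.sum_image (fun x _ y _ h => by injection h)

/-- Indicator: `w` is nonempty and starts with letter `b`. -/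
def Hf (b : ℕ) (w : List ℕ) : ℕ := if w ≠ [] ∧ w.getD 0 0 = b then 1 else 0

/-- Number of `l ≥ 1` such that `w` starts with `(b-1)^l b` (0 or 1). -/
def Ef (b : ℕ) (w : List ℕ) : ℕ :=
  ((Finset.Icc 1 (w.length + 1)).filter fun l =>
    l + 1 < w.length + 1 ∧ (∀ j, j < l → w.getD j 0 + 1 = b) ∧ w.getD l 0 = b).card

lemma getD_cons_one_add (b : ℕ) (w : List ℕ) (j : ℕ) :
    (b :: w).getD (1 + j) 0 = w.getD j 0 := by
  rw [Nat.add_comm, List.getD_cons_succ]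

lemma symValleys_cons (b : ℕ) (w : List ℕ) :
    symValleys (b :: w) = Ef b w + symValleys w := by
  set L := w.length with hL
  unfold symValleys Ef
  simp only [List.length_cons, Finset.card_filter, ← hL]
  simp only [Finset.sum_range_succ']
  rw [Finset.sum_add_distrib]
  rw [Finset.sum_Icc_succ_top (by omega : 1 ≤ L + 1)]
  have htop : ∑ i ∈ Finset.range L,
      (if (i + 1) + (L+1) + 1 < L + 1 ∧
        (∀ j, j < L + 1 → (b :: w).getD ((i+1) + 1 + j) 0 + 1 = (b :: w).getD (i+1) 0) ∧
        (b :: w).getD ((i+1) + (L+1) + 1) 0 = (b :: w).getD (i+1) 0 then 1 else 0) = 0 :=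
    Finset.sum_eq_zero fun i _ => if_neg (fun h => absurd h.1 (by omega))
  rw [htop, add_zero]
  simp only [List.getD_cons_succ, List.getD_cons_zero, getD_cons_one_add, zero_add,
    Nat.add_right_comm, Nat.add_lt_add_iff_right]
  ring

lemma getD_cons_one (a : ℕ) (l : List ℕ) : (a :: l).getD 1 0 = l.getD 0 0 := rfl

lemma Ef_cons (b c : ℕ) (w : List ℕ) :
    Ef b (c :: w) = if c + 1 = b then Hf b w + Ef b w else 0 := by
  set L := w.length with hL
  unfold Ef Hf
  simp only [List.length_cons, Finset.card_filter, ← hL]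
  have hset : Finset.Icc 1 (L+2) = insert 1 ((Finset.Icc 1 (L+1)).image (· + 1)) := by
    ext x; simp only [Finset.mem_Icc, Finset.mem_insert, Finset.mem_image]
    constructor
    · intro h
      rcases Nat.eq_or_lt_of_le h.1 with h1 | h1
      · exact Or.inl h1.symm
      · exact Or.inr ⟨x - 1, by omega, by omega⟩
    · rintro (rfl | ⟨y, hy, rfl⟩) <;> omega
  rw [hset, Finset.sum_insert (by simp), Finset.sum_image (fun x _ y _ h => by omega)]
  by_cases hc : c + 1 = b
  · rw [if_pos hc]
    congr 1
    · refine if_congr ?_ rfl rfl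
      constructor
      · rintro ⟨h1, -, h3⟩
        rw [getD_cons_one] at h3
        exact ⟨List.length_pos_iff.mp (by omega), h3⟩
      · rintro ⟨hne, h2⟩
        have hp : 0 < L := by rw [hL]; exact List.length_pos_iff.mpr hne
        refine ⟨by omega, ?_, by rwa [getD_cons_one]⟩
        intro j hj
        interval_cases j
        simpa using hc
    · refine Finset.sum_congr rfl fun l hl => ?_
      have hl1 : 1 ≤ l := (Finset.mem_Icc.mp hl).1
      refine if_congr ?_ rfl rfl
      rw [List.getD_cons_succ]
      constructor
      · rintro ⟨h1, h2, h3⟩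
        exact ⟨by omega, fun j hj => by simpa using h2 (j+1) (by omega), h3⟩
      · rintro ⟨h1, h2, h3⟩
        refine ⟨by omega, ?_, h3⟩
        intro j hj
        cases j with
        | zero => simpa using hc
        | succ j' => simpa using h2 j' (by omega)
  · rw [if_neg hc]
    have h2 : ∀ l ∈ Finset.Icc 1 (L+1), (if l + 1 + 1 < L + 1 + 1 ∧
        (∀ j, j < l + 1 → (c :: w).getD j 0 + 1 = b) ∧ (c :: w).getD (l+1) 0 = b
        then 1 else 0) = 0 := by
      intro l hl
      exact if_neg (fun h => hc (by simpa using h.2.1 0 (by omega)))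
    rw [Finset.sum_congr rfl h2]
    simp only [Finset.sum_const_zero, add_zero]
    exact if_neg (fun h => hc (by simpa using h.2.1 0 (by omega)))

def Sc (a n : ℕ) : ℕ := (D a n).card

def nz : List ℕ → ℕ
  | [] => 0
  | x :: t => nz t + (if x = 0 then 0 else 1)

def Zc (a n : ℕ) : ℕ := ∑ w ∈ D a n, nz w

def Vc (a n : ℕ) : ℕ := ∑ w ∈ D a n, symValleys w

lemma Sc_zero (a : ℕ) : Sc a 0 = 1 := by simp [Sc, D_zero]

lemma Sc_succ (a n : ℕ) : Sc a (n+1) = ∑ b ∈ Finset.range (a+2), Sc b n := by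
  rw [Sc, Finset.card_eq_sum_ones, sum_D]
  exact Finset.sum_congr rfl fun b _ => by rw [← Finset.card_eq_sum_ones]; rfl

lemma Zc_zero (a : ℕ) : Zc a 0 = 0 := by simp [Zc, D_zero, nz]

lemma Zc_succ (a n : ℕ) :
    Zc a (n+1) = ∑ b ∈ Finset.range (a+2), (Zc b n + if b = 0 then 0 else Sc b n) := by
  rw [Zc, sum_D]
  refine Finset.sum_congr rfl fun b _ => ?_
  have h : ∀ w : List ℕ, nz (b :: w) = nz w + (if b = 0 then 0 else 1) := fun w => rfl
  rw [Finset.sum_congr rfl fun w _ => h w, Finset.sum_add_distrib, Finset.sum_const]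
  congr 1
  split <;> simp [Sc]

lemma symValleys_nil : symValleys [] = 0 := by simp [symValleys]

lemma Ef_nil (b : ℕ) : Ef b [] = 0 := by
  simp [Ef]

lemma Ef_zero_w (w : List ℕ) : Ef 0 w = 0 := by
  unfold Ef
  refine Finset.card_eq_zero.mpr (Finset.filter_eq_empty_iff.mpr ?_)
  intro l hl
  rintro ⟨-, h2, -⟩
  have hl1 : 1 ≤ l := (Finset.mem_Icc.mp hl).1
  exact absurd (h2 0 (by omega)) (by simp)

lemma Hf_sum (n c b : ℕ) :
    ∑ w ∈ D c n, Hf b w = if b ≤ c + 1 ∧ n ≠ 0 then Sc b (n-1) else 0 := by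
  cases n with
  | zero =>
    rw [D_zero, Finset.sum_singleton]
    simp [Hf]
  | succ m =>
    rw [sum_D]
    have h : ∀ (b' : ℕ) (w : List ℕ), Hf b (b' :: w) = if b' = b then 1 else 0 := by
      intro b' w
      simp only [Hf]
      by_cases hb : b' = b <;> simp [hb]
    have h2 : ∀ b' ∈ Finset.range (c+2),
        (∑ w ∈ D b' m, Hf b (b' :: w)) = if b' = b then Sc b' m else 0 := by
      intro b' _
      rw [Finset.sum_congr rfl fun w _ => h b' w]
      by_cases hb : b' = b
      · rw [if_pos hb, Sc, Finset.card_eq_sum_ones]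
        rw [if_pos hb]
      · simp [hb]
    rw [Finset.sum_congr rfl h2, Finset.sum_ite_eq']
    simp only [Finset.mem_range, Nat.succ_sub_one]
    refine if_congr ?_ rfl rfl
    constructor
    · intro hlt; exact ⟨by omega, by omega⟩
    · intro hand; omega

lemma Ef_sum : ∀ (n b c : ℕ), 1 ≤ b → b ≤ c + 2 →
    ∑ w ∈ D c n, Ef b w = ∑ r ∈ Finset.range (n-1), Sc b r := by
  intro n
  induction n with
  | zero => intro b c _ _; simp [D_zero, Ef_nil]
  | succ n ih =>
    intro b c hb hbc
    obtain ⟨b', rfl⟩ : ∃ b'', b = b'' + 1 := ⟨b - 1, by omega⟩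
    rw [sum_D]
    have h1 : ∀ c' ∈ Finset.range (c+2),
        (∑ w ∈ D c' n, Ef (b'+1) (c'::w)) =
        if c' = b' then (∑ w ∈ D c' n, (Hf (b'+1) w + Ef (b'+1) w)) else 0 := by
      intro c' _
      rcases eq_or_ne c' b' with rfl | hne
      · simp [Ef_cons]
      · have h3 : ¬ (c' + 1 = b' + 1) := by omega
        simp [Ef_cons, h3, hne]
    rw [Finset.sum_congr rfl h1, Finset.sum_ite_eq', if_pos (by simp; omega)]
    rw [Finset.sum_add_distrib, Hf_sum, ih (b'+1) b' (by omega) (by omega)]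
    cases n with
    | zero => simp
    | succ m =>
      rw [if_pos ⟨by omega, by omega⟩]
      simp only [Nat.succ_sub_one, Finset.sum_range_succ]
      omega

lemma Vc_eq : ∀ (n a : ℕ), Vc a n = ∑ t ∈ Finset.range (n-1), Zc a t := by
  intro n
  induction n with
  | zero => intro a; simp [Vc, D_zero, symValleys_nil]
  | succ n ih =>
    intro a
    have step : Vc a (n+1) = ∑ b ∈ Finset.range (a+2),
        ((∑ w ∈ D b n, Ef b w) + Vc b n) := by
      rw [Vc, sum_D]
      refine Finset.sum_congr rfl fun b _ => ?_
      rw [Finset.sum_congr rfl fun w (_ : w ∈ D b n) => symValleys_cons b w,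
        Finset.sum_add_distrib]
      rfl
    rw [step]
    have h2 : ∀ b ∈ Finset.range (a+2), ((∑ w ∈ D b n, Ef b w) + Vc b n) =
        ∑ t ∈ Finset.range (n-1), ((if b = 0 then 0 else Sc b t) + Zc b t) := by
      intro b _
      rw [Finset.sum_add_distrib, ih b]
      congr 1
      rcases eq_or_ne b 0 with rfl | hb
      · simp [Ef_zero_w]
      · rw [Ef_sum n b b (by omega) (by omega)]
        exact Finset.sum_congr rfl fun r _ => by rw [if_neg hb]
    rw [Finset.sum_congr rfl h2, Finset.sum_comm]
    have h3 : ∀ t ∈ Finset.range (n-1), (∑ b ∈ Finset.range (a+2),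
        ((if b = 0 then 0 else Sc b t) + Zc b t)) = Zc a (t+1) := by
      intro t _
      rw [Zc_succ]
      exact Finset.sum_congr rfl fun b _ => by omega
    rw [Finset.sum_congr rfl h3, Nat.succ_sub_one]
    cases n with
    | zero => simp
    | succ m =>
      rw [Finset.sum_range_succ' (fun t => Zc a t) m]
      simp [Zc_zero]

lemma Zc_Sc : ∀ (t a : ℕ),
    Zc a t + ∑ p ∈ Finset.range t, Sc a p * Sc 0 (t - 1 - p) = t * Sc a t := by
  intro t
  induction t with
  | zero => intro a; simp [Zc_zero]
  | succ t ih =>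
    intro a
    rw [Zc_succ, Finset.sum_range_succ' (fun p => Sc a p * Sc 0 (t + 1 - 1 - p)) t]
    have e1 : ∀ p ∈ Finset.range t,
        Sc a (p+1) * Sc 0 (t + 1 - 1 - (p+1)) =
        ∑ b ∈ Finset.range (a+2), Sc b p * Sc 0 (t - 1 - p) := by
      intro p _
      rw [show t + 1 - 1 - (p+1) = t - 1 - p from by omega, Sc_succ, Finset.sum_mul]
    rw [Finset.sum_congr rfl e1, Sc_zero, one_mul,
      show t + 1 - 1 - 0 = t from by omega]
    have e2 : (∑ b ∈ Finset.range (a+2), (if b = 0 then 0 else Sc b t)) + Sc 0 t =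
        ∑ b ∈ Finset.range (a+2), Sc b t := by
      rw [Finset.sum_range_succ' (fun b => if b = 0 then 0 else Sc b t) (a+1),
        Finset.sum_range_succ' (fun b => Sc b t) (a+1)]
      simp
    have hsum : ((∑ b ∈ Finset.range (a+2), Zc b t)
        + ∑ b ∈ Finset.range (a+2), ∑ p ∈ Finset.range t, Sc b p * Sc 0 (t-1-p))
        = t * ∑ b ∈ Finset.range (a+2), Sc b t := by
      rw [← Finset.sum_add_distrib, Finset.mul_sum]
      exact Finset.sum_congr rfl fun b _ => ih b
    have hcomm : (∑ p ∈ Finset.range t, ∑ b ∈ Finset.range (a+2),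
          Sc b p * Sc 0 (t - 1 - p))
        = ∑ b ∈ Finset.range (a+2), ∑ p ∈ Finset.range t, Sc b p * Sc 0 (t-1-p) :=
      Finset.sum_comm
    rw [Finset.sum_add_distrib, hcomm, Sc_succ a t, Nat.succ_mul, ← hsum, ← e2]
    ring

lemma mem_D_iff : ∀ (n a : ℕ) (w : List ℕ), w ∈ D a n ↔
    (w.length = n ∧ w.getD 0 0 ≤ a + 1 ∧
     ∀ i, i + 1 < n → w.getD (i+1) 0 ≤ w.getD i 0 + 1) := by
  intro n
  induction n with
  | zero =>
    intro a w
    rw [D_zero]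
    simp only [Finset.mem_singleton]
    constructor
    · rintro rfl; simp
    · rintro ⟨hlen, -, -⟩; exact List.length_eq_zero_iff.mp hlen
  | succ n ih =>
    intro a w
    rw [D_succ]
    simp only [Finset.mem_biUnion, Finset.mem_image, Finset.mem_range]
    constructor
    · rintro ⟨b, hb, t, ht, rfl⟩
      obtain ⟨hlen, hhead, hstep⟩ := (ih b t).mp ht
      refine ⟨by simp [hlen], by simpa using (by omega : b ≤ a + 1), ?_⟩
      intro i hi
      cases i with
      | zero => simpa using hhead
      | succ i' => simpa using hstep i' (by omega)
    · rintro ⟨hlen, hhead, hstep⟩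
      cases w with
      | nil => simp at hlen
      | cons b t =>
        have hb : b ≤ a + 1 := by simpa using hhead
        refine ⟨b, by omega, t, (ih b t).mpr ⟨by simpa using hlen, ?_, ?_⟩, rfl⟩
        · cases t with
          | nil => simp
          | cons c s =>
            have := hstep 0 (by simp at hlen; omega)
            simpa using this
        · intro i hi
          have := hstep (i+1) (by omega)
          simpa using this

lemma catalanWord_eq (m : ℕ) :
    CatalanWord (m+1) = ↑((D 0 m).image (fun t => (0 :: t : List ℕ))) := by
  ext w
  simp only [CatalanWord, Set.mem_setOf_eq, Finset.coe_image, Set.mem_image,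
    Finset.mem_coe]
  constructor
  · rintro ⟨hlen, hhead, hstep⟩
    cases w with
    | nil => simp at hlen
    | cons b t =>
      have hb : b = 0 := by simpa using hhead
      subst hb
      refine ⟨t, (mem_D_iff m 0 t).mpr ⟨by simpa using hlen, ?_, ?_⟩, rfl⟩
      · cases t with
        | nil => simp
        | cons c s =>
          have := hstep 0 (by simp at hlen; omega)
          simpa using this
      · intro i hi
        have := hstep (i+1) (by omega)
        simpa using this
  · rintro ⟨t, ht, rfl⟩
    obtain ⟨hlen, hhead, hstep⟩ := (mem_D_iff m 0 t).mp ht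
    refine ⟨by simp [hlen], by simp, ?_⟩
    intro i hi
    cases i with
    | zero => simpa using hhead
    | succ i' => simpa using hstep i' (by omega)

lemma Sc_one (a : ℕ) : Sc a 1 = a + 2 := by
  rw [Sc_succ]
  simp [Sc_zero]

lemma choose_sum (s a : ℕ) : (∑ b ∈ Finset.range (a+2),
    (((2*s+b+3).choose (s+1) : ℤ) - ((2*s+b+3).choose s : ℤ)))
    = ((2*s+a+5).choose (s+2) : ℤ) - ((2*s+a+5).choose (s+1) : ℤ) := by
  induction a with
  | zero =>
    rw [Finset.sum_range_succ, Finset.sum_range_one]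
    have h1 : (2*s+5).choose (s+2) = (2*s+4).choose (s+1) + (2*s+4).choose (s+2) := by
      rw [show 2*s+5 = (2*s+4)+1 from by omega]
      exact Nat.choose_succ_succ _ _
    have h2 : (2*s+5).choose (s+1) = (2*s+4).choose s + (2*s+4).choose (s+1) := by
      rw [show 2*s+5 = (2*s+4)+1 from by omega, show s+1 = s+1 from rfl]
      exact Nat.choose_succ_succ _ _
    have h3 : (2*s+4).choose (s+2) = (2*s+3).choose (s+1) + (2*s+3).choose (s+2) := by
      rw [show 2*s+4 = (2*s+3)+1 from by omega]
      exact Nat.choose_succ_succ _ _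
    have h4 : (2*s+4).choose (s+1) = (2*s+3).choose s + (2*s+3).choose (s+1) := by
      rw [show 2*s+4 = (2*s+3)+1 from by omega]
      exact Nat.choose_succ_succ _ _
    have h5 : (2*s+3).choose (s+2) = (2*s+3).choose (s+1) := by
      rw [show s+2 = (2*s+3) - (s+1) from by omega]
      exact Nat.choose_symm (by omega)
    have c1 := congrArg (Nat.cast (R := ℤ)) h1
    have c2 := congrArg (Nat.cast (R := ℤ)) h2
    have c3 := congrArg (Nat.cast (R := ℤ)) h3
    have c4 := congrArg (Nat.cast (R := ℤ)) h4
    have c5 := congrArg (Nat.cast (R := ℤ)) h5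
    push_cast at c1 c2 c3 c4 c5
    have e0 : 2*s+0+3 = 2*s+3 := by omega
    have e1 : 2*s+1+3 = 2*s+4 := by omega
    rw [e0, e1]
    linarith
  | succ a iha =>
    rw [Finset.sum_range_succ, iha,
      show 2*s+(a+2)+3 = 2*s+a+5 from by omega]
    have h1 : (2*s+a+6).choose (s+2) = (2*s+a+5).choose (s+1) + (2*s+a+5).choose (s+2) := by
      rw [show 2*s+a+6 = (2*s+a+5)+1 from by omega]
      exact Nat.choose_succ_succ _ _
    have h2 : (2*s+a+6).choose (s+1) = (2*s+a+5).choose s + (2*s+a+5).choose (s+1) := by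
      rw [show 2*s+a+6 = (2*s+a+5)+1 from by omega]
      exact Nat.choose_succ_succ _ _
    have c1 := congrArg (Nat.cast (R := ℤ)) h1
    have c2 := congrArg (Nat.cast (R := ℤ)) h2
    push_cast at c1 c2
    rw [show 2*s+(a+1)+5 = 2*s+a+6 from by omega]
    linarith

lemma Sc_closed : ∀ (s a : ℕ), (Sc a (s+1) : ℤ) =
    ((2*s+a+3).choose (s+1) : ℤ) - ((2*s+a+3).choose s : ℤ) := by
  intro s
  induction s with
  | zero =>
    intro a
    rw [Sc_one, show 2*0+a+3 = a+3 from by omega]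
    rw [Nat.choose_one_right, Nat.choose_zero_right]
    push_cast
    ring
  | succ s ih =>
    intro a
    have h : Sc a (s+1+1) = ∑ b ∈ Finset.range (a+2), Sc b (s+1) := Sc_succ a (s+1)
    have hcast : (Sc a (s+1+1) : ℤ) = ∑ b ∈ Finset.range (a+2), (Sc b (s+1) : ℤ) := by
      rw [h]; push_cast; rfl
    rw [hcast, Finset.sum_congr rfl fun b _ => ih b, choose_sum s a,
      show 2*(s+1)+a+3 = 2*s+a+5 from by omega]

lemma Sc0_cat : ∀ t, Sc 0 t = catalan (t+1) := by
  intro t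
  cases t with
  | zero => simp [Sc_zero]
  | succ s =>
    have h := Sc_closed s 0
    rw [show 2*s+0+3 = 2*s+3 from by omega] at h
    apply Nat.eq_of_mul_eq_mul_left (show 0 < s+3 by omega)
    have hc : (s+3) * catalan (s+2) = Nat.centralBinom (s+2) :=
      succ_mul_catalan_eq_centralBinom (s+2)
    have hcb : Nat.centralBinom (s+2) = 2 * (2*s+3).choose (s+1) := by
      rw [Nat.centralBinom_eq_two_mul_choose,
        show 2*(s+2) = (2*s+3)+1 from by omega]
      rw [Nat.choose_succ_succ (2*s+3) (s+1)]
      simp only [Nat.succ_eq_add_one]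
      rw [show s+1+1 = (2*s+3) - (s+1) from by omega, Nat.choose_symm (by omega)]
      ring
    have hsr : (2*s+3).choose (s+1) * (s+1) = (2*s+3).choose s * (s+3) := by
      have := Nat.choose_succ_right_eq (2*s+3) s
      rwa [show 2*s+3-s = s+3 from by omega] at this
    have key : ((s:ℤ)+3) * (Sc 0 (s+1) : ℤ) = ((s:ℤ)+3) * (catalan (s+2) : ℤ) := by
      have f1 := congrArg (Nat.cast (R := ℤ)) hsr
      have f2 := congrArg (Nat.cast (R := ℤ)) hc
      have f3 := congrArg (Nat.cast (R := ℤ)) hcb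
      push_cast at f1 f2 f3
      rw [h]
      linear_combination f1 - f2 - f3
    exact_mod_cast key

lemma cat_step (k : ℕ) : (k+2) * catalan (k+1) = 2 * (2*k+1) * catalan k := by
  have h1 : (k+2) * catalan (k+1) = Nat.centralBinom (k+1) :=
    succ_mul_catalan_eq_centralBinom (k+1)
  have h2 : (k+1) * Nat.centralBinom (k+1) = 2 * (2*k+1) * Nat.centralBinom k :=
    Nat.succ_mul_centralBinom_succ k
  have h3 : (k+1) * catalan k = Nat.centralBinom k :=
    succ_mul_catalan_eq_centralBinom k
  apply Nat.eq_of_mul_eq_mul_left (show 0 < k+1 by omega)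
  calc (k+1) * ((k+2) * catalan (k+1)) = (k+1) * Nat.centralBinom (k+1) := by rw [h1]
    _ = 2*(2*k+1) * Nat.centralBinom k := h2
    _ = 2*(2*k+1) * ((k+1) * catalan k) := by rw [h3]
    _ = (k+1) * (2 * (2*k+1) * catalan k) := by ring

lemma cat_conv (t : ℕ) : catalan (t+2) =
    2 * catalan (t+1) + ∑ p ∈ Finset.range t, catalan (p+1) * catalan (t - p) := by
  have h := catalan_succ' (t+1)
  rw [Finset.Nat.sum_antidiagonal_eq_sum_range_succ_mk] at h
  rw [h, Finset.sum_range_succ, Finset.sum_range_succ']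
  simp only [catalan_zero, one_mul, mul_one, Nat.sub_self, Nat.sub_zero]
  have : ∀ p ∈ Finset.range t, catalan (p+1) * catalan (t+1-(p+1)) =
      catalan (p+1) * catalan (t-p) := by
    intro p _
    rw [show t+1-(p+1) = t - p from by omega]
  rw [Finset.sum_congr rfl this]
  ring

lemma Zc0_cat (t : ℕ) : (Zc 0 t : ℤ) =
    ((t:ℤ)+2) * (catalan (t+1) : ℤ) - (catalan (t+2) : ℤ) := by
  have h := Zc_Sc t 0
  have hsum : (∑ p ∈ Finset.range t, Sc 0 p * Sc 0 (t-1-p)) =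
      ∑ p ∈ Finset.range t, catalan (p+1) * catalan (t-p) := by
    refine Finset.sum_congr rfl fun p hp => ?_
    have hp' : p < t := Finset.mem_range.mp hp
    rw [Sc0_cat p, Sc0_cat (t-1-p), show t-1-p+1 = t-p from by omega]
  rw [hsum, Sc0_cat t] at h
  have hconv := cat_conv t
  have f1 := congrArg (Nat.cast (R := ℤ)) h
  have f2 := congrArg (Nat.cast (R := ℤ)) hconv
  push_cast at f1 f2
  linarith

lemma final_id : ∀ m : ℕ,
    2 * (∑ t ∈ Finset.range m, (((t:ℤ)+2) * (catalan (t+1) : ℤ) - (catalan (t+2) : ℤ)))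
    = 2 * (3*((m:ℤ)+2) - 2) * (catalan (m+1) : ℤ)
      - ∑ k ∈ Finset.Icc 1 (m+2), (((2*k).choose k : ℤ)) := by
  intro m
  induction m with
  | zero =>
    rw [Finset.sum_range_zero, Finset.sum_Icc_succ_top (by omega : 1 ≤ 2),
      Finset.Icc_self, Finset.sum_singleton]
    norm_num [catalan_one, show Nat.choose 4 2 = 6 from rfl]
  | succ m ih =>
    rw [Finset.sum_range_succ, Finset.sum_Icc_succ_top (show 1 ≤ m+3 by omega)]
    have h1 := cat_step (m+1)
    have h2 := cat_step (m+2)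
    have h3 : (2*(m+3)).choose (m+3) = (m+4) * catalan (m+3) := by
      rw [← Nat.centralBinom_eq_two_mul_choose]
      exact (succ_mul_catalan_eq_centralBinom (m+3)).symm
    have c1 := congrArg (Nat.cast (R := ℤ)) h1
    have c2 := congrArg (Nat.cast (R := ℤ)) h2
    have c3 := congrArg (Nat.cast (R := ℤ)) h3
    push_cast at c1 c2 c3
    push_cast
    push_cast at ih
    linarith

end SymVal

/-- The total number `s(n)` of symmetric valleys over all Catalan words of length `n`
satisfies `2·s(n) = 2(3n-2)·c_{n-1} - Σ_{k=1}^{n} C(2k,k)`, where `c_m` is the `m`-th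
Catalan number. -/
theorem total_symValleys (n : ℕ) (hn : 1 ≤ n) :
    ((2 * ∑ᶠ w ∈ CatalanWord n, symValleys w : ℕ) : ℤ) =
      2 * (3 * (n : ℤ) - 2) * (catalan (n - 1) : ℤ) -
        ∑ k ∈ Finset.Icc 1 n, (Nat.choose (2 * k) k : ℤ) := by
  obtain ⟨m, rfl⟩ : ∃ m, n = m + 1 := ⟨n-1, by omega⟩
  rw [SymVal.catalanWord_eq m, finsum_mem_coe_finset,
    Finset.sum_image (fun x _ y _ h => (List.cons_eq_cons.mp h).2)]
  have hv : ∑ t ∈ SymVal.D 0 m, symValleys (0 :: t) = SymVal.Vc 0 m := by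
    rw [SymVal.Vc]
    refine Finset.sum_congr rfl fun t _ => ?_
    rw [SymVal.symValleys_cons, SymVal.Ef_zero_w, zero_add]
  rw [hv, SymVal.Vc_eq]
  cases m with
  | zero =>
    rw [Finset.Icc_self, Finset.sum_singleton]
    norm_num
  | succ m' =>
    rw [show m' + 1 - 1 = m' from rfl]
    push_cast
    rw [Finset.sum_congr rfl (fun t _ => SymVal.Zc0_cat t)]
    have := SymVal.final_id m'
    rw [show m' + 1 + 1 = m' + 2 from rfl]
    push_cast at this ⊢
    linarith
end

section
/- Fix an integer ℓ ≥ 1. For every integer n ≥ ℓ + 2, the total number of ℓ-peaks over all Catalan words of length n equals C(2(n-ℓ)-1, n-ℓ-2); moreover this total is 0 when 1 ≤ n < ℓ + 2. -/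
/-- Number of `l`-peaks of `w`: occurrences of a factor `a (a+1)^l b` with `a ≥ b`. -/
def lPeaks (l : ℕ) (w : List ℕ) : ℕ :=
  ((Finset.range w.length).filter (fun i =>
    i + l + 1 < w.length ∧
    (∀ j, j < l → w.getD (i + 1 + j) 0 = w.getD i 0 + 1) ∧
    w.getD (i + l + 1) 0 ≤ w.getD i 0)).card

/-!
Catalan words grow letter by letter on the right, so we store them reversed (`revFinset n`) and
let them grow at the head. Appending a letter `c` to a word ending in `a (a+1)^l` creates exactly
one new `l`-peak when `c ≤ a`, and deleting the plateau `(a+1)^l` is a bijection from such words of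
length `m + l` onto Catalan words of length `m`. Refining by the last letter `k`, this gives
recurrences which are solved by the ballot numbers `C(2n-k-2, n-1) - C(2n-k-2, n)` for the number of
words and by `(k+1) C(2m-k-3, m-1)`, `m = n - l`, for the total number of `l`-peaks; both are checked
with Pascal's rule. Summing over `k` gives `C(2m-2, m) + C(2m-2, m+1) = C(2m-1, m-2)`.
-/

open Finset

theorem Nat.choose_succ_le_choose {N t : ℕ} (h : N ≤ 2 * t + 1) : N.choose (t + 1) ≤ N.choose t := by
  refine Nat.le_of_mul_le_mul_right ?_ (Nat.succ_pos t)
  rw [Nat.choose_succ_right_eq]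
  exact Nat.mul_le_mul_left _ (by omega)

namespace CatalanWord

/-- The largest letter that may follow a Catalan word stored in reverse. -/
def maxNext : List ℕ → ℕ
  | [] => 0
  | a :: _ => a + 1

def revFinset : ℕ → Finset (List ℕ)
  | 0 => {[]}
  | n + 1 => (revFinset n).biUnion fun r => (range (maxNext r + 1)).image (· :: r)

theorem cons_mem_revFinset_succ {n c : ℕ} {r : List ℕ} :
    c :: r ∈ revFinset (n + 1) ↔ r ∈ revFinset n ∧ c ≤ maxNext r := by
  simp only [revFinset, mem_biUnion, mem_image, mem_range, List.cons.injEq]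
  constructor
  · rintro ⟨r', hr', c', hc', rfl, rfl⟩
    exact ⟨hr', by omega⟩
  · rintro ⟨hr, hc⟩
    exact ⟨r, hr, c, by omega, rfl, rfl⟩

theorem nil_notMem_revFinset_succ (n : ℕ) : [] ∉ revFinset (n + 1) := by
  simp [revFinset]

theorem length_of_mem_revFinset : ∀ {n : ℕ} {r : List ℕ}, r ∈ revFinset n → r.length = n
  | 0, r, h => by simp_all [revFinset]
  | n + 1, [], h => absurd h (nil_notMem_revFinset_succ n)
  | n + 1, _ :: _, h => by
    simp [length_of_mem_revFinset (cons_mem_revFinset_succ.1 h).1]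

theorem maxNext_le_of_mem_revFinset : ∀ {n : ℕ} {r : List ℕ}, r ∈ revFinset n → maxNext r ≤ n
  | 0, r, h => by simp_all [revFinset, maxNext]
  | n + 1, [], h => absurd h (nil_notMem_revFinset_succ n)
  | n + 1, c :: r, h => by
    have := cons_mem_revFinset_succ.1 h
    have := maxNext_le_of_mem_revFinset this.1
    simp only [maxNext]
    omega

theorem sum_revFinset_succ {M : Type*} [AddCommMonoid M] (n : ℕ) (f : List ℕ → M) :
    ∑ r ∈ revFinset (n + 1), f r = ∑ r ∈ revFinset n, ∑ c ∈ range (maxNext r + 1), f (c :: r) := by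
  rw [revFinset, sum_biUnion]
  · exact sum_congr rfl fun r _ => sum_image fun _ _ _ _ h => List.head_eq_of_cons_eq h
  · intro r₁ _ r₂ _ hne
    simp only [Function.onFun, disjoint_left, mem_image]
    rintro _ ⟨c₁, _, rfl⟩ ⟨c₂, _, h⟩
    exact hne (List.tail_eq_of_cons_eq h).symm

theorem reverse_cons_mem_catalanWord_iff {n c : ℕ} {r : List ℕ} :
    (c :: r).reverse ∈ CatalanWord (n + 1) ↔ r.reverse ∈ CatalanWord n ∧ c ≤ maxNext r := by
  obtain _ | ⟨a, t⟩ := r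
  · simp only [CatalanWord, Set.mem_ofPred_eq, maxNext]
    grind
  have hget : ∀ i ≤ t.length, (t.reverse ++ [a, c]).getD i 0 = (t.reverse ++ [a]).getD i 0 := by
    grind
  have hlast : (t.reverse ++ [a, c]).getD (t.length + 1) 0 = c := by grind
  have ha : (t.reverse ++ [a]).getD t.length 0 = a := by grind
  simp only [CatalanWord, Set.mem_ofPred_eq, maxNext, List.reverse_cons, List.append_assoc,
    List.cons_append, List.nil_append, List.length_append, List.length_reverse, List.length_cons,
    List.length_nil]
  constructor
  · rintro ⟨hn, h0, hstep⟩
    obtain rfl : n = t.length + 1 := by omega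
    refine ⟨⟨rfl, by rwa [hget 0 (by omega)] at h0, fun i hi => ?_⟩, ?_⟩
    · have := hstep i (by omega)
      rwa [hget _ (by omega), hget _ (by omega)] at this
    · have := hstep t.length (by omega)
      rwa [hlast, hget _ le_rfl, ha] at this
  · rintro ⟨⟨rfl, h0, hstep⟩, hc⟩
    refine ⟨by omega, by rwa [hget 0 (by omega)], fun i hi => ?_⟩
    rcases (show i + 1 < t.length + 1 ∨ i = t.length by omega) with hi | rfl
    · rw [hget _ (by omega), hget _ (by omega)]; exact hstep i hi
    · rw [hlast, hget _ le_rfl, ha]; exact hc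

theorem mem_revFinset_iff : ∀ {n : ℕ} {r : List ℕ}, r ∈ revFinset n ↔ r.reverse ∈ CatalanWord n
  | 0, r => by
    simp only [revFinset, mem_singleton, CatalanWord, Set.mem_ofPred_eq,
      List.length_eq_zero_iff]
    constructor
    · rintro rfl; simp
    · exact fun h => List.reverse_eq_nil_iff.1 h.1
  | n + 1, [] => by simp [nil_notMem_revFinset_succ, CatalanWord]
  | n + 1, c :: r => by rw [cons_mem_revFinset_succ, reverse_cons_mem_catalanWord_iff, mem_revFinset_iff]

theorem catalanWord_eq_image_reverse (n : ℕ) :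
    CatalanWord n = (revFinset n).image List.reverse := by
  ext w
  rw [coe_image, Set.mem_image]
  exact ⟨fun hw => ⟨w.reverse, by simpa [mem_revFinset_iff], w.reverse_reverse⟩,
    by rintro ⟨r, hr, rfl⟩; exact mem_revFinset_iff.1 hr⟩

def revPeaks (l : ℕ) (r : List ℕ) : ℕ :=
  #{q ∈ range r.length | q + l + 1 < r.length ∧
    (∀ j < l, r.getD (q + j + 1) 0 = r.getD (q + l + 1) 0 + 1) ∧ r.getD q 0 ≤ r.getD (q + l + 1) 0}

theorem lPeaks_condition_reverse {l i : ℕ} {r : List ℕ} (h : i + l + 1 < r.length) :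
    ((∀ j < l, r.reverse.getD (i + 1 + j) 0 = r.reverse.getD i 0 + 1) ∧
      r.reverse.getD (i + l + 1) 0 ≤ r.reverse.getD i 0) ↔
    ((∀ j < l, r.getD (r.length - (i + l + 2) + j + 1) 0 =
        r.getD (r.length - (i + l + 2) + l + 1) 0 + 1) ∧
      r.getD (r.length - (i + l + 2)) 0 ≤ r.getD (r.length - (i + l + 2) + l + 1) 0) := by
  have hrev : ∀ x < r.length, r.reverse.getD x 0 = r.getD (r.length - 1 - x) 0 :=
    fun x hx => congrFun (List.getD_reverse x hx) 0
  have hi : r.length - 1 - i = r.length - (i + l + 2) + l + 1 := by omega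
  have hil : r.length - 1 - (i + l + 1) = r.length - (i + l + 2) := by omega
  rw [hrev i (by omega), hrev (i + l + 1) h, hi, hil]
  refine and_congr_left' ⟨fun hrun j hj => ?_, fun hrun j hj => ?_⟩
  · have := hrun (l - 1 - j) (by omega)
    rwa [hrev _ (by omega), show r.length - 1 - (i + 1 + (l - 1 - j)) =
      r.length - (i + l + 2) + j + 1 by omega] at this
  · rw [hrev _ (by omega), show r.length - 1 - (i + 1 + j) =
      r.length - (i + l + 2) + (l - 1 - j) + 1 by omega]
    exact hrun (l - 1 - j) (by omega)

theorem lPeaks_reverse (l : ℕ) (r : List ℕ) : lPeaks l r.reverse = revPeaks l r := by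
  unfold lPeaks revPeaks
  rw [List.length_reverse]
  apply card_nbij' (fun i => r.length - (i + l + 2)) (fun q => r.length - (q + l + 2))
  · intro i hi
    simp only [coe_filter, mem_range, Set.mem_ofPred_eq] at hi ⊢
    exact ⟨by omega, by omega, (lPeaks_condition_reverse hi.2.1).1 hi.2.2⟩
  · intro q hq
    simp only [coe_filter, mem_range, Set.mem_ofPred_eq] at hq ⊢
    have hq' : r.length - (r.length - (q + l + 2) + l + 2) = q := by omega
    refine ⟨by omega, by omega, (lPeaks_condition_reverse (by omega)).2 ?_⟩
    rw [hq']
    exact hq.2.2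
  · intro i hi
    simp only [coe_filter, mem_range, Set.mem_ofPred_eq] at hi
    dsimp only
    omega
  · intro q hq
    simp only [coe_filter, mem_range, Set.mem_ofPred_eq] at hq
    dsimp only
    omega

/-- `r.reverse` ends in `a (a+1)^l`, where `a = r.getD l 0`. -/
def EndsInPlateau (l : ℕ) (r : List ℕ) : Prop :=
  l < r.length ∧ r.take l = List.replicate l (r.getD l 0 + 1)

instance (l : ℕ) (r : List ℕ) : Decidable (EndsInPlateau l r) :=
  inferInstanceAs (Decidable (_ ∧ _))

theorem take_eq_replicate_iff {l v : ℕ} {r : List ℕ} (h : l ≤ r.length) :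
    r.take l = List.replicate l v ↔ ∀ j < l, r.getD j 0 = v := by
  simp only [List.eq_replicate_iff, List.length_take, List.forall_mem_iff_getElem]
  grind

theorem revPeaks_cons (l c : ℕ) (r : List ℕ) :
    revPeaks l (c :: r) = revPeaks l r + if EndsInPlateau l r ∧ c ≤ r.getD l 0 then 1 else 0 := by
  unfold revPeaks
  rw [card_filter, card_filter, List.length_cons, sum_range_succ']
  congr 1
  · refine sum_congr rfl fun q _ => ?_
    simp only [List.getD_cons_succ, Nat.add_right_comm _ 1, Nat.add_lt_add_iff_right]
  · simp only [List.getD_cons_succ, List.getD_cons_zero, zero_add, EndsInPlateau]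
    refine if_congr ⟨fun ⟨hl, hrun, hc⟩ => ⟨⟨by omega, (take_eq_replicate_iff (by omega)).2 hrun⟩, hc⟩,
      fun ⟨⟨hl, hrun⟩, hc⟩ => ⟨by omega, (take_eq_replicate_iff hl.le).1 hrun, hc⟩⟩ rfl rfl

theorem tail_mem_revFinset {n : ℕ} {r : List ℕ} (h : r ∈ revFinset (n + 1)) :
    r.tail ∈ revFinset n := by
  obtain _ | ⟨c, r⟩ := r
  · exact absurd h (nil_notMem_revFinset_succ n)
  · exact (cons_mem_revFinset_succ.1 h).1

theorem drop_mem_revFinset {m : ℕ} : ∀ {l : ℕ} {r : List ℕ}, r ∈ revFinset (m + l) →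
    r.drop l ∈ revFinset m
  | 0, _, h => h
  | l + 1, r, h => by
    simpa [List.drop_drop, Nat.add_comm] using drop_mem_revFinset (tail_mem_revFinset h)

theorem replicate_append_mem_revFinset {m : ℕ} {u : List ℕ} (hu : u ∈ revFinset m)
    (hne : u ≠ []) : ∀ l, List.replicate l (u.headD 0 + 1) ++ u ∈ revFinset (m + l)
  | 0 => hu
  | l + 1 => by
    rw [List.replicate_succ, List.cons_append]
    refine cons_mem_revFinset_succ.2 ⟨replicate_append_mem_revFinset hu hne l, ?_⟩
    obtain _ | ⟨a, u⟩ := u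
    · exact absurd rfl hne
    · cases l <;> simp [maxNext, List.replicate_succ]

theorem card_endsInPlateau (m l k : ℕ) :
    #{r ∈ revFinset (m + l) | EndsInPlateau l r ∧ k ≤ r.getD l 0} =
      #{u ∈ revFinset m | k < maxNext u} := by
  apply card_nbij' (fun r => r.drop l) (fun u => List.replicate l (u.headD 0 + 1) ++ u)
    <;> simp only [coe_filter]
  · rintro r ⟨hr, ⟨hl, -⟩, hk⟩
    refine ⟨drop_mem_revFinset hr, ?_⟩
    dsimp only
    rw [List.drop_eq_getElem_cons hl, maxNext, ← List.getD_eq_getElem r 0 hl]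
    omega
  · rintro (_ | ⟨a, u⟩) ⟨hu, hk⟩
    · exact absurd hk (Nat.not_lt_zero k)
    have hlen := length_of_mem_revFinset hu
    refine ⟨replicate_append_mem_revFinset hu (List.cons_ne_nil a u) l, ⟨by simp, ?_⟩, ?_⟩
    · simp [List.take_left']
    · rw [List.getD_append_right _ _ _ _ (by simp), List.length_replicate, Nat.sub_self,
        List.getD_cons_zero]
      exact Nat.le_of_lt_succ hk
  · rintro r ⟨-, ⟨hl, hrun⟩, -⟩
    have hhead : (r.drop l).headD 0 = r.getD l 0 := by
      rw [List.drop_eq_getElem_cons hl, List.headD_cons, List.getD_eq_getElem r 0 hl]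
    dsimp only
    rw [hhead, ← hrun, List.take_append_drop]
  · intro u _
    simp

theorem ne_nil_of_mem_revFinset {n : ℕ} {r : List ℕ} (h : r ∈ revFinset n) (hn : n ≠ 0) :
    r ≠ [] := by
  rintro rfl
  obtain ⟨n, rfl⟩ := Nat.exists_eq_succ_of_ne_zero hn
  exact nil_notMem_revFinset_succ n h

theorem maxNext_eq_headD_add_one {r : List ℕ} (h : r ≠ []) : maxNext r = r.headD 0 + 1 := by
  obtain _ | ⟨a, r⟩ := r
  · exact absurd rfl h
  · rfl

theorem sum_revFinset_eq_sum_range {M : Type*} [AddCommMonoid M] {n : ℕ} (hn : n ≠ 0)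
    (f : List ℕ → M) :
    ∑ r ∈ revFinset n, f r = ∑ k ∈ range n, ∑ r ∈ revFinset n with r.headD 0 = k, f r := by
  refine (sum_fiberwise_of_maps_to (fun r hr => mem_range.2 ?_) f).symm
  have := maxNext_le_of_mem_revFinset hr
  rw [maxNext_eq_headD_add_one (ne_nil_of_mem_revFinset hr hn)] at this
  omega

theorem sum_filter_lt_maxNext {M : Type*} [AddCommMonoid M] (n a : ℕ) (f : List ℕ → M) :
    ∑ r ∈ revFinset n with a < maxNext r, f r =
      ∑ j ∈ Ico a n, ∑ r ∈ revFinset n with r.headD 0 = j, f r := by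
  have hmaps : ∀ r ∈ (revFinset n).filter (a < maxNext ·), r.headD 0 ∈ Ico a n := by
    intro r hr
    rw [mem_filter] at hr
    have hne : r ≠ [] := by rintro rfl; exact absurd hr.2 (Nat.not_lt_zero a)
    have := maxNext_le_of_mem_revFinset hr.1
    rw [maxNext_eq_headD_add_one hne] at this hr
    exact mem_Ico.2 ⟨by omega, by omega⟩
  rw [← sum_fiberwise_of_maps_to hmaps]
  refine sum_congr rfl fun j hj => ?_
  rw [filter_filter]
  refine sum_congr (filter_congr fun r hr => ?_) fun _ _ => rfl
  rw [mem_Ico] at hj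
  constructor
  · exact fun h => h.2
  · intro h
    refine ⟨?_, h⟩
    rw [maxNext_eq_headD_add_one (ne_nil_of_mem_revFinset hr (by omega))]
    omega

theorem sum_filter_headD_succ {M : Type*} [AddCommMonoid M] (n k : ℕ) (f : List ℕ → M) :
    ∑ r ∈ revFinset (n + 1) with r.headD 0 = k, f r =
      ∑ r ∈ revFinset n with k ≤ maxNext r, f (k :: r) := by
  rw [sum_filter, sum_revFinset_succ, sum_filter]
  refine sum_congr rfl fun r _ => ?_
  simp

def headCount (n k : ℕ) : ℕ := #{r ∈ revFinset n | r.headD 0 = k}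

def headPeaks (l n k : ℕ) : ℕ := ∑ r ∈ revFinset n with r.headD 0 = k, revPeaks l r

theorem le_maxNext_iff {n k : ℕ} {r : List ℕ} (hr : r ∈ revFinset n) (hn : n ≠ 0) :
    k ≤ maxNext r ↔ k - 1 < maxNext r := by
  rw [maxNext_eq_headD_add_one (ne_nil_of_mem_revFinset hr hn)]
  omega

theorem headCount_succ {n : ℕ} (hn : n ≠ 0) (k : ℕ) :
    headCount (n + 1) k = ∑ j ∈ Ico (k - 1) n, headCount n j := by
  simp only [headCount, card_eq_sum_ones]
  rw [sum_filter_headD_succ, ← sum_filter_lt_maxNext,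
    filter_congr fun r hr => le_maxNext_iff hr hn]

theorem EndsInPlateau.headD_eq {l : ℕ} {r : List ℕ} (h : EndsInPlateau l r) (hl : l ≠ 0) :
    r.headD 0 = r.getD l 0 + 1 := by
  obtain _ | ⟨a, r⟩ := r
  · exact absurd h.1 (Nat.not_lt_zero l)
  · exact (take_eq_replicate_iff h.1.le).1 h.2 0 (Nat.pos_of_ne_zero hl)

theorem headPeaks_succ {l : ℕ} (hl : l ≠ 0) (m k : ℕ) :
    headPeaks l (m + l + 1) k =
      ∑ j ∈ Ico (k - 1) (m + l), headPeaks l (m + l) j + ∑ a ∈ Ico k m, headCount m a := by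
  have hml : m + l ≠ 0 := by omega
  have hnew : ∑ r ∈ revFinset (m + l) with k ≤ maxNext r,
      (if EndsInPlateau l r ∧ k ≤ r.getD l 0 then 1 else 0) =
      #{r ∈ revFinset (m + l) | EndsInPlateau l r ∧ k ≤ r.getD l 0} := by
    rw [sum_boole, filter_filter, Nat.cast_id]
    congr 1
    refine filter_congr fun r _ => ⟨fun h => h.2, fun h => ⟨?_, h⟩⟩
    rw [maxNext_eq_headD_add_one (List.ne_nil_of_length_pos (Nat.zero_lt_of_lt h.1.1)),
      h.1.headD_eq hl]
    omega
  simp only [headPeaks, headCount, card_eq_sum_ones]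
  rw [sum_filter_headD_succ]
  simp only [revPeaks_cons]
  rw [sum_add_distrib, hnew, card_endsInPlateau, card_eq_sum_ones, sum_filter_lt_maxNext,
    filter_congr fun r hr => le_maxNext_iff hr hml, sum_filter_lt_maxNext]

-- Without the `if` guards, truncated subtraction would make `ballot 1 k` and `peakCount 1 k`
-- nonzero.
def ballot (n k : ℕ) : ℕ :=
  if k < n then (2 * n - k - 2).choose (n - 1) - (2 * n - k - 2).choose n else 0

def peakCount (m k : ℕ) : ℕ :=
  if 2 ≤ m then (k + 1) * (2 * m - k - 3).choose (m - 1) else 0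

theorem ballot_add_choose {n k : ℕ} (h : k < n) :
    ballot n k + (2 * n - k - 2).choose n = (2 * n - k - 2).choose (n - 1) := by
  have : (2 * n - k - 2).choose (n - 1 + 1) ≤ (2 * n - k - 2).choose (n - 1) :=
    Nat.choose_succ_le_choose (by omega)
  rw [Nat.sub_add_cancel (by omega)] at this
  rw [ballot, if_pos h]
  omega

theorem sum_Ico_ballot_add_choose {n : ℕ} (hn : n ≠ 0) :
    ∀ {i}, i ≤ n → ∑ j ∈ Ico i n, ballot n j + (2 * n - i - 1).choose (n + 1) =
      (2 * n - i - 1).choose n := by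
  suffices ∀ d ≤ n, ∑ j ∈ Ico (n - d) n, ballot n j + (n + d - 1).choose (n + 1) =
      (n + d - 1).choose n by
    intro i hi
    have := this (n - i) (by omega)
    rwa [Nat.sub_sub_self hi, show n + (n - i) - 1 = 2 * n - i - 1 by omega] at this
  intro d
  induction d with
  | zero => simp [Nat.choose_eq_zero_of_lt, show n - 1 < n by omega]
  | succ d ih =>
    intro hd
    obtain ⟨s, rfl⟩ : ∃ s, n = s + 1 := ⟨n - 1, by omega⟩
    rw [sum_eq_sum_Ico_succ_bot (by omega), show s + 1 - (d + 1) + 1 = s + 1 - d by omega]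
    have hb := ballot_add_choose (show s + 1 - (d + 1) < s + 1 by omega)
    have ih := ih (by omega)
    rw [show 2 * (s + 1) - (s + 1 - (d + 1)) - 2 = s + d by omega] at hb
    rw [show s + 1 + d - 1 = s + d by omega] at ih
    rw [show s + 1 + (d + 1) - 1 = s + d + 1 by omega, Nat.choose_succ_succ' (s + d),
      Nat.choose_succ_succ' (s + d)]
    simp only [Nat.add_sub_cancel] at hb
    omega

theorem ballot_succ {n : ℕ} (hn : n ≠ 0) (k : ℕ) :
    ballot (n + 1) k = ∑ j ∈ Ico (k - 1) n, ballot n j := by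
  obtain hk | hk := le_or_gt k n
  · have hsum := sum_Ico_ballot_add_choose hn (show k - 1 ≤ n by omega)
    rw [ballot, if_pos (by omega), show 2 * (n + 1) - k - 2 = 2 * n - k by omega,
      Nat.add_sub_cancel]
    obtain rfl | hk0 := Nat.eq_zero_or_pos k
    · obtain ⟨s, rfl⟩ : ∃ s, n = s + 1 := ⟨n - 1, by omega⟩
      have hsymm := Nat.choose_symm_half s
      rw [show 2 * (s + 1) - (0 - 1) - 1 = 2 * s + 1 by omega] at hsum
      rw [show 2 * (s + 1) - 0 = 2 * s + 1 + 1 by omega, Nat.choose_succ_succ' (2 * s + 1) s,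
        Nat.choose_succ_succ' (2 * s + 1) (s + 1)]
      omega
    · rw [show 2 * n - (k - 1) - 1 = 2 * n - k by omega] at hsum
      omega
  · rw [ballot, if_neg (by omega), Ico_eq_empty (by omega), sum_empty]

theorem sum_Ico_peakCount {m : ℕ} (hm : 2 ≤ m) :
    ∀ {i}, i ≤ m → ∑ j ∈ Ico i m, peakCount m j =
      (i + 1) * (2 * m - i - 2).choose m + (2 * m - i - 2).choose (m + 1) := by
  suffices ∀ d i, i + d = m → ∑ j ∈ Ico i m, peakCount m j =
      (i + 1) * (2 * m - i - 2).choose m + (2 * m - i - 2).choose (m + 1) from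
    fun {i} hi => this (m - i) i (Nat.add_sub_cancel' hi)
  intro d
  induction d with
  | zero =>
    rintro i rfl
    rw [add_zero, Ico_self, sum_empty, Nat.choose_eq_zero_of_lt (by omega),
      Nat.choose_eq_zero_of_lt (by omega), mul_zero, add_zero]
  | succ d ih =>
    intro i hi
    obtain ⟨s, rfl⟩ : ∃ s, m = s + 2 := ⟨m - 2, by omega⟩
    rw [sum_eq_sum_Ico_succ_bot (by omega), ih (i + 1) (by omega), peakCount, if_pos hm,
      show 2 * (s + 2) - i - 2 = 2 * s + 1 - i + 1 by omega,
      show 2 * (s + 2) - (i + 1) - 2 = 2 * s + 1 - i by omega,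
      show 2 * (s + 2) - i - 3 = 2 * s + 1 - i by omega, show s + 2 - 1 = s + 1 by omega,
      Nat.choose_succ_succ', Nat.choose_succ_succ' (2 * s + 1 - i) (s + 2)]
    ring

theorem peakCount_eq_zero {m k : ℕ} (h : m ≤ k + 1) : peakCount m k = 0 := by
  unfold peakCount
  split_ifs
  · rw [Nat.choose_eq_zero_of_lt (by omega), mul_zero]
  · rfl

theorem peakCount_succ {m N : ℕ} (hN : m ≤ N) (k : ℕ) :
    peakCount (m + 1) k = ∑ j ∈ Ico (k - 1) N, peakCount m j + ∑ a ∈ Ico k m, ballot m a := by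
  obtain hk | hk := lt_or_ge m k
  · rw [peakCount_eq_zero (by omega), Ico_eq_empty_of_le hk.le, sum_empty, add_zero,
      sum_eq_zero fun j hj => peakCount_eq_zero (by simp only [mem_Ico] at hj; omega)]
  have htail : ∑ j ∈ Ico m N, peakCount m j = 0 :=
    sum_eq_zero fun j hj => peakCount_eq_zero (by simp only [mem_Ico] at hj; omega)
  rw [← sum_Ico_consecutive _ (show k - 1 ≤ m by omega) hN, htail, add_zero]
  rcases Nat.lt_or_ge m 2 with hm | hm
  · interval_cases m <;> interval_cases k <;> simp [peakCount, ballot]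
  obtain ⟨s, rfl⟩ : ∃ s, m = s + 2 := ⟨m - 2, by omega⟩
  have hP := sum_Ico_peakCount (show 2 ≤ s + 2 by omega) (show k - 1 ≤ s + 2 by omega)
  have hB := sum_Ico_ballot_add_choose (show s + 2 ≠ 0 by omega) hk
  rw [peakCount, if_pos (by omega), show 2 * (s + 2 + 1) - k - 3 = 2 * (s + 2) - k - 1 by omega,
    Nat.add_sub_cancel, hP]
  obtain rfl | hk0 := Nat.eq_zero_or_pos k
  · rw [show 2 * (s + 2) - 0 - 1 = 2 * s + 2 + 1 by omega,
      Nat.choose_succ_succ' (2 * s + 2) (s + 2)] at hB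
    rw [show 2 * (s + 2) - 0 - 1 = 2 * s + 2 + 1 by omega,
      show 2 * (s + 2) - (0 - 1) - 2 = 2 * s + 2 by omega, Nat.zero_sub, zero_add, one_mul, one_mul]
    omega
  · rw [show 2 * (s + 2) - (k - 1) - 2 = 2 * (s + 2) - k - 1 by omega, Nat.sub_add_cancel hk0]
    linarith

theorem sum_range_peakCount {m N : ℕ} (hm : 2 ≤ m) (hN : m ≤ N) :
    ∑ k ∈ range N, peakCount m k = (2 * m - 1).choose (m - 2) := by
  have htail : ∑ k ∈ Ico m N, peakCount m k = 0 :=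
    sum_eq_zero fun j hj => peakCount_eq_zero (by simp only [mem_Ico] at hj; omega)
  rw [range_eq_Ico, ← sum_Ico_consecutive _ (Nat.zero_le m) hN, htail, add_zero,
    sum_Ico_peakCount hm (Nat.zero_le m)]
  obtain ⟨s, rfl⟩ : ∃ s, m = s + 2 := ⟨m - 2, by omega⟩
  rw [show 2 * (s + 2) - 0 - 2 = 2 * s + 2 by omega, show 2 * (s + 2) - 1 = 2 * s + 2 + 1 by omega,
    Nat.add_sub_cancel, Nat.choose_symm_of_eq_add (show 2 * s + 2 + 1 = s + (s + 2 + 1) by omega),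
    Nat.choose_succ_succ' (2 * s + 2) (s + 2), zero_add, one_mul]

theorem headCount_eq_ballot {n : ℕ} (hn : n ≠ 0) (k : ℕ) : headCount n k = ballot n k := by
  induction n, Nat.one_le_iff_ne_zero.2 hn using Nat.le_induction generalizing k with
  | base =>
    cases k with
    | zero => decide
    | succ k => simp [headCount, revFinset, maxNext, ballot]
  | succ n hn ih =>
    rw [headCount_succ (by omega), ballot_succ (by omega)]
    exact sum_congr rfl fun j _ => ih (by omega) j

theorem revPeaks_eq_zero {l : ℕ} {r : List ℕ} (h : r.length ≤ l + 1) : revPeaks l r = 0 := by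
  rw [revPeaks, card_eq_zero, filter_eq_empty_iff]
  intro q _ hq
  omega

theorem headPeaks_eq_peakCount {l : ℕ} (hl : l ≠ 0) (m k : ℕ) :
    headPeaks l (m + l) k = peakCount m k := by
  induction m generalizing k with
  | zero =>
    refine (sum_eq_zero fun r hr => revPeaks_eq_zero ?_).trans rfl
    rw [length_of_mem_revFinset (mem_filter.1 hr).1]
    omega
  | succ m ih =>
    have hcount : ∑ a ∈ Ico k m, headCount m a = ∑ a ∈ Ico k m, ballot m a :=
      sum_congr rfl fun a ha => headCount_eq_ballot (by simp only [mem_Ico] at ha; omega) a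
    rw [Nat.add_right_comm, headPeaks_succ hl, hcount, peakCount_succ (by omega : m ≤ m + l)]
    exact congrArg (· + _) (sum_congr rfl fun j _ => ih j)

theorem finsum_lPeaks_eq_sum_revPeaks (l n : ℕ) :
    ∑ᶠ w ∈ CatalanWord n, lPeaks l w = ∑ r ∈ revFinset n, revPeaks l r := by
  rw [catalanWord_eq_image_reverse, finsum_mem_coe_finset,
    sum_image fun _ _ _ _ h => List.reverse_injective h]
  exact sum_congr rfl fun r _ => lPeaks_reverse l r

end CatalanWord

open CatalanWord

/-- For fixed `l ≥ 1`, the total number of `l`-peaks over all Catalan words of length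
`n` equals `C(2(n-l)-1, n-l-2)` for `n ≥ l+2`, and is `0` for `1 ≤ n < l+2`. -/
theorem total_lPeaks (l : ℕ) (hl : 1 ≤ l) :
    (∀ n : ℕ, l + 2 ≤ n →
      ∑ᶠ w ∈ CatalanWord n, lPeaks l w =
        Nat.choose (2 * (n - l) - 1) (n - l - 2)) ∧
    (∀ n : ℕ, 1 ≤ n → n < l + 2 →
      ∑ᶠ w ∈ CatalanWord n, lPeaks l w = 0) := by
  refine ⟨fun n hn => ?_, fun n _ hn => ?_⟩
  · obtain ⟨m, rfl⟩ : ∃ m, n = m + l := ⟨n - l, by omega⟩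
    rw [finsum_lPeaks_eq_sum_revPeaks, sum_revFinset_eq_sum_range (by omega), Nat.add_sub_cancel]
    change ∑ k ∈ range (m + l), headPeaks l (m + l) k = _
    simp only [headPeaks_eq_peakCount (by omega : l ≠ 0)]
    exact sum_range_peakCount (by omega) (by omega)
  · rw [finsum_lPeaks_eq_sum_revPeaks]
    exact sum_eq_zero fun r hr => revPeaks_eq_zero (by rw [length_of_mem_revFinset hr]; omega)
end
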